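/- arXiv:1807.04944 — 5 statements merged into one kernel-verified Lean document; each statement's English description precedes it below -/
import Mathlib

section
/- Let Δ ⊆ ℝ^n be a Newton polyhedron (the convex hull of a set S + ℝ_{≥0}^n for some S ⊆ ℕ^n) with a loose edge E having endpoints a and b. Then for every point c ∈ Δ and every vector ξ ∈ ℝ_{≥0}^n with ⟨ξ,a⟩ = ⟨ξ,b⟩, one has ⟨ξ,c⟩ ≥ ⟨ξ,a⟩. -/
open scoped Pointwise

noncomputable section

/-- Standard scalar product on `Fin n → ℝ`. -/
def dotR {n : ℕ} (ξ a : Fin n → ℝ) : ℝ := ∑ i, ξ i * a i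

/-- The nonnegative orthant in `Fin n → ℝ`. -/
def posOrthant (n : ℕ) : Set (Fin n → ℝ) := {x | ∀ i, 0 ≤ x i}

/-- A Newton polyhedron: the convex hull of `S + ℝ_{≥0}^n` for a nonempty `S ⊆ ℕ^n`. -/
def IsNewtonPolyhedron {n : ℕ} (Δ : Set (Fin n → ℝ)) : Prop :=
  ∃ S : Set (Fin n → ℕ), S.Nonempty ∧
    Δ = convexHull ℝ (((fun α : Fin n → ℕ => fun i => (α i : ℝ)) '' S) + posOrthant n)

/-- The face of `Δ` in direction `ξ`: the points of `Δ` minimizing `⟨ξ, ·⟩`. -/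
def faceOf {n : ℕ} (Δ : Set (Fin n → ℝ)) (ξ : Fin n → ℝ) : Set (Fin n → ℝ) :=
  {a ∈ Δ | ∀ b ∈ Δ, dotR ξ a ≤ dotR ξ b}

/-- `F` is a face of `Δ` (cut out by some `ξ` with nonnegative entries). -/
def IsFaceOf {n : ℕ} (Δ F : Set (Fin n → ℝ)) : Prop :=
  ∃ ξ : Fin n → ℝ, (∀ i, 0 ≤ ξ i) ∧ F = faceOf Δ ξ

/-- The dimension of a face: the rank of its direction space. -/
def faceDim {n : ℕ} (F : Set (Fin n → ℝ)) : ℕ := Module.finrank ℝ (vectorSpan ℝ F)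

/-- A loose edge: a compact edge not contained in any compact face of dimension ≥ 2. -/
def IsLooseEdge {n : ℕ} (Δ E : Set (Fin n → ℝ)) : Prop :=
  IsFaceOf Δ E ∧ IsCompact E ∧ faceDim E = 1 ∧
    ∀ F : Set (Fin n → ℝ), IsFaceOf Δ F → IsCompact F → E ⊆ F → faceDim F ≤ 1

/-- `v` is a vertex of `Δ` : the singleton `{v}` is a face. -/
def IsVertexOf {n : ℕ} (Δ : Set (Fin n → ℝ)) (v : Fin n → ℝ) : Prop :=
  IsFaceOf Δ {v}

/-!
By Dickson's lemma, `Δ = conv W + ℝ≥0ⁿ` for a finite set `W`. The edge is cut out by some `η`,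
which is strictly positive because the edge is bounded. If some `c ∈ Δ` had `⟨ξ,c⟩ < ⟨ξ,a⟩`,
tilt `η` towards `ξ`: the largest `τ ≥ 0` for which `η + τ ξ` is still minimised at `a` (over `W`,
hence over `Δ`) also minimises it at a generator `v` with `⟨ξ,v⟩ < ⟨ξ,a⟩`. The face cut out by
`η + τ ξ` is then compact, contains the edge and `v`, so has dimension at least 2, contradicting
looseness.
-/

open Matrix

theorem Set.exists_finset_subset_forall_exists_le {α : Type*} [PartialOrder α]
    [WellQuasiOrderedLE α] (S : Set α) : ∃ V : Finset α, ↑V ⊆ S ∧ ∀ s ∈ S, ∃ v ∈ V, v ≤ s := by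
  have hfin : {x | Minimal (· ∈ S) x}.Finite :=
    (setOfPred_minimal_antichain _).finite_of_partiallyWellOrderedOn
      (Set.isPWO_of_wellQuasiOrderedLE _)
  refine ⟨hfin.toFinset, fun v hv => (hfin.mem_toFinset.1 hv).prop, fun s hs => ?_⟩
  obtain ⟨v, hvs, hv⟩ := (Set.isPWO_of_wellQuasiOrderedLE S).exists_le_minimal hs
  exact ⟨v, hfin.mem_toFinset.2 hv, hvs⟩

theorem Finset.exists_critical_tilt {ι : Type*} (W : Finset ι) (f g : ι → ℝ) {m A : ℝ}
    (hf : ∀ w ∈ W, m ≤ f w) (hg : ∃ w ∈ W, g w < A) :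
    ∃ τ, 0 ≤ τ ∧ ∃ v ∈ W, g v < A ∧ f v + τ * g v = m + τ * A ∧
      ∀ w ∈ W, m + τ * A ≤ f w + τ * g w := by
  classical
  have hne : (W.filter (g · < A)).Nonempty := by
    obtain ⟨w, hw, hgw⟩ := hg
    exact ⟨w, mem_filter.2 ⟨hw, hgw⟩⟩
  obtain ⟨v, hv, hmin⟩ := (W.filter (g · < A)).exists_min_image (fun w => (f w - m) / (A - g w)) hne
  obtain ⟨hvW, hgv⟩ := mem_filter.1 hv
  have hAv : 0 < A - g v := sub_pos.2 hgv
  set τ := (f v - m) / (A - g v)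
  have hτ0 : 0 ≤ τ := div_nonneg (sub_nonneg.2 (hf v hvW)) hAv.le
  have hτv : τ * (A - g v) = f v - m := div_mul_cancel₀ _ hAv.ne'
  refine ⟨τ, hτ0, v, hvW, hgv, by linarith, fun w hw => ?_⟩
  by_cases hgw : g w < A
  · have hτw : τ * (A - g w) ≤ f w - m :=
      (le_div_iff₀ (sub_pos.2 hgw)).1 (hmin w (mem_filter.2 ⟨hw, hgw⟩))
    linarith
  · nlinarith [hf w hw]

theorem two_le_finrank_vectorSpan {K V : Type*} [Field K] [AddCommGroup V] [Module K V]
    [FiniteDimensional K V] (f : V →ₗ[K] K) {s : Set V} {a b v : V} (ha : a ∈ s) (hb : b ∈ s)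
    (hv : v ∈ s) (hab : a ≠ b) (hfab : f a = f b) (hfv : f v ≠ f a) :
    2 ≤ Module.finrank K (vectorSpan K s) := by
  have hli : LinearIndependent K ![b - a, v - a] := by
    refine LinearIndependent.pair_iff.2 fun x y hxy => ?_
    have hy : y * (f v - f a) = 0 := by
      simpa [hfab, mul_sub] using congrArg f hxy
    obtain rfl : y = 0 := (mul_eq_zero.1 hy).resolve_right (sub_ne_zero.2 hfv)
    simpa [sub_eq_zero, hab.symm] using hxy
  have hspan : Submodule.span K (Set.range ![b - a, v - a]) ≤ vectorSpan K s := by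
    rw [Submodule.span_le, Matrix.range_cons, Matrix.range_cons, Matrix.range_empty,
      Set.union_empty, Set.singleton_union, Set.insert_subset_iff, Set.singleton_subset_iff]
    exact ⟨vsub_mem_vectorSpan K hb ha, vsub_mem_vectorSpan K hv ha⟩
  simpa [finrank_span_eq_card hli] using Submodule.finrank_mono hspan

variable {n : ℕ}

lemma dotR_eq_dotProduct (ξ x : Fin n → ℝ) : dotR ξ x = ξ ⬝ᵥ x := rfl

lemma posOrthant_eq_Ici (n : ℕ) : posOrthant n = Set.Ici 0 := rfl

lemma mem_posOrthant_iff {p : Fin n → ℝ} : p ∈ posOrthant n ↔ 0 ≤ p := Iff.rfl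

lemma eq_zero_of_dotProduct_nonpos {ζ p : Fin n → ℝ} (hζ : ∀ i, 0 < ζ i) (hp : 0 ≤ p)
    (h : ζ ⬝ᵥ p ≤ 0) : p = 0 := by
  by_contra hne
  obtain ⟨i, hi⟩ := Function.ne_iff.1 hne
  have hpos : 0 < ζ ⬝ᵥ p := Finset.sum_pos' (fun j _ => mul_nonneg (hζ j).le (hp j))
    ⟨i, Finset.mem_univ i, mul_pos (hζ i) (lt_of_le_of_ne (hp i) (Ne.symm hi))⟩
  linarith

theorem IsNewtonPolyhedron.exists_finset {Δ : Set (Fin n → ℝ)} (hΔ : IsNewtonPolyhedron Δ) :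
    ∃ W : Finset (Fin n → ℝ), Δ = convexHull ℝ ↑W + posOrthant n := by
  classical
  obtain ⟨S, -, rfl⟩ := hΔ
  obtain ⟨V, hVS, hdom⟩ := S.exists_finset_subset_forall_exists_le
  set ι : (Fin n → ℕ) → Fin n → ℝ := fun α i => (α i : ℝ)
  have hι : Monotone ι := fun α β h i => Nat.cast_le.2 (h i)
  refine ⟨V.image ι, ?_⟩
  have hgen : ι '' S + posOrthant n = ↑(V.image ι) + posOrthant n := by
    apply le_antisymm
    · rintro _ ⟨_, ⟨s, hs, rfl⟩, p, hp, rfl⟩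
      obtain ⟨v, hv, hvs⟩ := hdom s hs
      refine ⟨ι v, by simpa using ⟨v, hv, rfl⟩, ι s - ι v + p, ?_, ?_⟩
      · exact add_nonneg (sub_nonneg.2 (hι hvs)) hp
      · show ι v + (ι s - ι v + p) = ι s + p
        abel
    · refine Set.add_subset_add_right ?_
      rw [Finset.coe_image]
      exact Set.image_mono hVS
  rw [hgen, convexHull_add, posOrthant_eq_Ici, (convex_Ici 0).convexHull_eq]

lemma faceOf_eq_inter_biInter (Δ : Set (Fin n → ℝ)) (ζ : Fin n → ℝ) :
    faceOf Δ ζ = Δ ∩ ⋂ y ∈ Δ, {x | dotR ζ x ≤ dotR ζ y} := by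
  ext
  simp [faceOf]

lemma IsClosed.faceOf {Δ : Set (Fin n → ℝ)} (hΔ : IsClosed Δ) (ζ : Fin n → ℝ) :
    IsClosed (faceOf Δ ζ) := by
  rw [faceOf_eq_inter_biInter]
  exact hΔ.inter <| isClosed_biInter fun y _ =>
    _root_.isClosed_le (dotProductBilin ℝ ℝ ζ).continuous_of_finiteDimensional continuous_const

lemma Convex.faceOf {Δ : Set (Fin n → ℝ)} (hΔ : Convex ℝ Δ) (ζ : Fin n → ℝ) :
    Convex ℝ (faceOf Δ ζ) := by
  rw [faceOf_eq_inter_biInter]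
  exact hΔ.inter <| convex_iInter₂ fun y _ =>
    convex_halfSpace_le (dotProductBilin ℝ ℝ ζ).isLinear _

lemma le_dotR_of_mem_convexHull_add_posOrthant {W : Set (Fin n → ℝ)} {ζ : Fin n → ℝ}
    (hζ : ∀ i, 0 ≤ ζ i) {m : ℝ} (hW : ∀ w ∈ W, m ≤ dotR ζ w) {x : Fin n → ℝ}
    (hx : x ∈ convexHull ℝ W + posOrthant n) : m ≤ dotR ζ x := by
  obtain ⟨k, hk, p, hp, rfl⟩ := Set.mem_add.1 hx
  have hk' : m ≤ ζ ⬝ᵥ k :=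
    convexHull_min hW (convex_halfSpace_ge (dotProductBilin ℝ ℝ ζ).isLinear m) hk
  have hp' : 0 ≤ ζ ⬝ᵥ p := dotProduct_nonneg_of_nonneg hζ hp
  rw [dotR_eq_dotProduct, dotProduct_add]
  linarith

lemma mem_faceOf_of_forall_le {W : Set (Fin n → ℝ)} {ζ x : Fin n → ℝ} (hζ : ∀ i, 0 ≤ ζ i)
    (hx : x ∈ convexHull ℝ W + posOrthant n) (hW : ∀ w ∈ W, dotR ζ x ≤ dotR ζ w) :
    x ∈ faceOf (convexHull ℝ W + posOrthant n) ζ :=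
  ⟨hx, fun _ hy => le_dotR_of_mem_convexHull_add_posOrthant hζ hW hy⟩

lemma add_mem_faceOf_add_posOrthant {K : Set (Fin n → ℝ)} {η x p : Fin n → ℝ}
    (hx : x ∈ faceOf (K + posOrthant n) η) (hp : p ∈ posOrthant n) (hηp : dotR η p = 0) :
    x + p ∈ faceOf (K + posOrthant n) η := by
  obtain ⟨hxΔ, hmin⟩ := hx
  obtain ⟨k, hk, q, hq, rfl⟩ := Set.mem_add.1 hxΔ
  have hxpΔ : k + q + p ∈ K + posOrthant n :=
    ⟨k, hk, q + p, mem_posOrthant_iff.2 (add_nonneg hq hp), (add_assoc _ _ _).symm⟩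
  refine ⟨hxpΔ, fun y hy => ?_⟩
  rw [dotR_eq_dotProduct, dotProduct_add]
  exact (add_eq_left.2 hηp).trans_le (hmin y hy)

lemma pos_of_isBounded_faceOf_add_posOrthant {K : Set (Fin n → ℝ)} {η : Fin n → ℝ}
    (hη : ∀ i, 0 ≤ η i) (hne : (faceOf (K + posOrthant n) η).Nonempty)
    (hbdd : Bornology.IsBounded (faceOf (K + posOrthant n) η)) (i : Fin n) : 0 < η i := by
  refine (hη i).lt_of_ne fun h0 => ?_
  obtain ⟨x, hx⟩ := hne
  obtain ⟨C, hC⟩ := hbdd.exists_norm_le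
  set s := |C - x i| + 1
  have hray : x + s • Pi.single i 1 ∈ faceOf (K + posOrthant n) η :=
    add_mem_faceOf_add_posOrthant hx
      (mem_posOrthant_iff.2 (smul_nonneg (by positivity) (Pi.single_nonneg.2 zero_le_one)))
      (by simp [dotR_eq_dotProduct, ← h0])
  have hcoord : x i + s ≤ C := by
    simpa using (le_abs_self _).trans ((norm_le_pi_norm _ i).trans (hC _ hray))
  linarith [le_abs_self (C - x i)]

lemma isCompact_faceOf_add_posOrthant {K : Set (Fin n → ℝ)} (hK : IsCompact K)
    {ζ : Fin n → ℝ} (hζ : ∀ i, 0 < ζ i) : IsCompact (faceOf (K + posOrthant n) ζ) := by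
  have hclosed : IsClosed (K + posOrthant n) := by
    rw [posOrthant_eq_Ici]
    exact isClosed_Ici.add_left_of_isCompact hK
  refine hK.of_isClosed_subset (hclosed.faceOf ζ) fun x ⟨hxΔ, hmin⟩ => ?_
  obtain ⟨k, hk, p, hp, rfl⟩ := Set.mem_add.1 hxΔ
  have hp0 : ζ ⬝ᵥ p ≤ 0 := by
    have := hmin k (Set.mem_add.2 ⟨k, hk, 0, mem_posOrthant_iff.2 le_rfl, add_zero k⟩)
    rw [dotR_eq_dotProduct, dotR_eq_dotProduct, dotProduct_add] at this
    linarith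
  rwa [eq_zero_of_dotProduct_nonpos hζ hp hp0, add_zero]

/-- Lemma 1: For a loose edge `E` of a Newton polyhedron `Δ` with endpoints `a`, `b`,
any `c ∈ Δ` and any `ξ ≥ 0` with `⟨ξ,a⟩ = ⟨ξ,b⟩` satisfy `⟨ξ,c⟩ ≥ ⟨ξ,a⟩`. -/
theorem looseEdge_min {n : ℕ} (Δ E : Set (Fin n → ℝ)) (a b : Fin n → ℝ)
    (hΔ : IsNewtonPolyhedron Δ) (hE : IsLooseEdge Δ E)
    (hab : a ≠ b) (hseg : E = segment ℝ a b) :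
    ∀ c ∈ Δ, ∀ ξ : Fin n → ℝ, (∀ i, 0 ≤ ξ i) → dotR ξ a = dotR ξ b →
      dotR ξ a ≤ dotR ξ c := by
  intro c hc ξ hξ hξab
  by_contra! hca
  obtain ⟨W, rfl⟩ := hΔ.exists_finset
  have hWΔ : (W : Set (Fin n → ℝ)) ⊆ convexHull ℝ ↑W + posOrthant n :=
    fun _ hw => Set.subset_add_left _ (mem_posOrthant_iff.2 le_rfl) (subset_convexHull ℝ _ hw)
  obtain ⟨⟨η, hη, hEη⟩, hEcpt, -, hloose⟩ := hE
  have haE : a ∈ E := hseg ▸ left_mem_segment ℝ a b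
  have hbE : b ∈ E := hseg ▸ right_mem_segment ℝ a b
  rw [hEη] at haE hbE hEcpt
  have hηpos := pos_of_isBounded_faceOf_add_posOrthant hη ⟨a, haE⟩ hEcpt.isBounded
  have hξW : ∃ w ∈ W, dotR ξ w < dotR ξ a := by
    by_contra! h
    exact hca.not_ge (le_dotR_of_mem_convexHull_add_posOrthant hξ h hc)
  obtain ⟨τ, hτ, v, hvW, hξv, hv, hmin⟩ := W.exists_critical_tilt (dotR η) (dotR ξ)
    (fun w hw => haE.2 w (hWΔ hw)) hξW
  set ζ := η + τ • ξ
  have hζ (x : Fin n → ℝ) : dotR ζ x = dotR η x + τ * dotR ξ x := by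
    simp [ζ, dotR_eq_dotProduct, add_dotProduct]
  have hζpos (i : Fin n) : 0 < ζ i := by
    simpa [ζ] using add_pos_of_pos_of_nonneg (hηpos i) (mul_nonneg hτ (hξ i))
  have hmemF {x} (hx : x ∈ convexHull ℝ ↑W + posOrthant n)
      (hxa : dotR ζ x = dotR η a + τ * dotR ξ a) : x ∈ faceOf (convexHull ℝ ↑W + posOrthant n) ζ :=
    mem_faceOf_of_forall_le (fun i => (hζpos i).le) hx fun w hw => by rw [hxa, hζ]; exact hmin w hw
  have hηab : dotR η a = dotR η b := le_antisymm (haE.2 b hbE.1) (hbE.2 a haE.1)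
  have haF := hmemF haE.1 (hζ a)
  have hbF := hmemF hbE.1 (by rw [hζ, hηab, hξab])
  have hvF := hmemF (hWΔ hvW) (by rw [hζ, hv])
  have hdim := two_le_finrank_vectorSpan (dotProductBilin ℝ ℝ ξ) haF hbF hvF hab hξab hξv.ne
  have hEF : E ⊆ faceOf (convexHull ℝ ↑W + posOrthant n) ζ := by
    rw [hseg]
    exact ((convex_convexHull ℝ _).add (convex_Ici 0)).faceOf ζ |>.segment_subset haF hbF
  have hdim_le := hloose _ ⟨ζ, fun i => (hζpos i).le, rfl⟩
    (isCompact_faceOf_add_posOrthant (W.finite_toSet.isCompact_convexHull ℝ) hζpos) hEF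
  exact absurd (hdim.trans hdim_le) (by norm_num)
end
end

section
/- Let c ∈ ℤ^n have at least one positive and at least one negative coordinate. Then there exists a basis ξ_1,…,ξ_n of the real vector space ℝ^n such that ξ_i ∈ ℕ^n for all i = 1,…,n and ⟨ξ_i, c⟩ = 0 for i = 1,…,n−1. -/
/-!
Pick `p` with `c p > 0` and `q` with `c q < 0`. For indices `i, k` whose coordinates have
opposite signs, `|c k| e_i + |c i| e_k` is a nonnegative integer vector orthogonal to `c`.
Pairing every `j` with `c j < 0` with `p`, and every other `j ≠ p` with `q`, gives `n - 1` such
vectors; together with `e_p` they form a basis, because the matrix is triangular for the order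
`p`, then the negative coordinates, then the rest.
-/

open Finset Submodule Set

theorem linearIndependent_of_eq_single_add_single {K ι : Type*} [Field K] [Fintype ι]
    [DecidableEq ι] {v : ι → ι → K} (a b : ι → K) (t : ι → ι) (ρ : ι → ℕ) (ha : ∀ j, a j ≠ 0)
    (hv : ∀ j, v j = Pi.single j (a j) + Pi.single (t j) (b j))
    (ht : ∀ j, b j ≠ 0 → ρ (t j) < ρ j) :
    LinearIndependent K v := by
  have hsingle : ∀ j, Pi.single j 1 ∈ span K (range v) := by
    intro j
    induction j using (measure ρ).wf.induction with
    | _ j ih =>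
      have hbt : b j • Pi.single (t j) (1 : K) ∈ span K (range v) := by
        by_cases hb : b j = 0
        · simp [hb]
        · exact smul_mem _ _ (ih _ (ht j hb))
      have hdiff : v j - b j • Pi.single (t j) 1 = a j • Pi.single j 1 := by
        simp [hv, ← Pi.single_smul]
      rw [← smul_mem_iff _ (ha j), ← hdiff]
      exact sub_mem (subset_span ⟨j, rfl⟩) hbt
  refine linearIndependent_of_top_le_span_of_card_eq_finrank ?_ (by simp)
  rw [← (Pi.basisFun K ι).span_eq, span_le]
  rintro _ ⟨j, rfl⟩
  simpa using hsingle j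

section

variable {ι : Type*} (c : ι → ℤ)

def partner (p q j : ι) : ι := if c j < 0 then p else q

theorem mul_partner_nonpos {p q : ι} (hp : 0 < c p) (hq : c q < 0) (j : ι) :
    c j * c (partner c p q j) ≤ 0 := by
  unfold partner
  split_ifs <;> nlinarith

variable [DecidableEq ι]

def balancingVector (i k : ι) : ι → ℕ :=
  Pi.single i (c k).natAbs + Pi.single k (c i).natAbs

theorem sum_balancingVector_mul_eq_zero [Fintype ι] {i k : ι} (h : c i * c k ≤ 0) :
    ∑ l, (balancingVector c i k l : ℤ) * c l = 0 := by
  simp only [balancingVector, Pi.add_apply, Nat.cast_add, add_mul, sum_add_distrib,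
    Pi.single_apply, Nat.cast_ite, Nat.cast_zero, ite_mul, zero_mul, Fintype.sum_ite_eq',
    Int.natCast_natAbs]
  rcases abs_cases (c i) with ⟨hi, _⟩ | ⟨hi, _⟩ <;>
    rcases abs_cases (c k) with ⟨hk, _⟩ | ⟨hk, _⟩ <;> rw [hi, hk] <;> nlinarith

def nonnegBasisFamily (p q : ι) (j : ι) : ι → ℕ :=
  if j = p then Pi.single p 1 else balancingVector c j (partner c p q j)

theorem linearIndependent_nonnegBasisFamily [Fintype ι] (K : Type*) [Field K] [CharZero K]
    {p q : ι} (hp : 0 < c p) (hq : c q < 0) :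
    LinearIndependent K (fun j k => (nonnegBasisFamily c p q j k : K)) := by
  have hqp : q ≠ p := ne_of_apply_ne c (by omega)
  refine linearIndependent_of_eq_single_add_single
    (fun j => if j = p then 1 else ((c (partner c p q j)).natAbs : K))
    (fun j => if j = p then 0 else ((c j).natAbs : K)) (partner c p q)
    (fun j => if j = p then 0 else if c j < 0 then 1 else 2) ?_ ?_ ?_
  · intro j
    split_ifs with hj
    · exact one_ne_zero
    · unfold partner; split_ifs <;> simp <;> omega
  · intro j
    ext k
    by_cases hj : j = p
    · simp [nonnegBasisFamily, hj, Pi.single_apply]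
    · simp [nonnegBasisFamily, balancingVector, hj, Pi.single_apply, Nat.cast_ite]
  · intro j hb
    have hj : j ≠ p := by rintro rfl; simp at hb
    unfold partner
    split_ifs <;> simp_all

end

/-- Lemma 3: for `c ∈ ℤ^n` with at least one positive and one negative coordinate,
there is a basis `ξ_1, …, ξ_n` of `ℝ^n` consisting of vectors with nonnegative integer
entries such that the first `n-1` of them are orthogonal to `c`. -/
theorem exists_nonneg_basis_orthogonal {n : ℕ} (c : Fin n → ℤ)
    (hpos : ∃ i, 0 < c i) (hneg : ∃ i, c i < 0) :
    ∃ ξ : Fin n → (Fin n → ℕ),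
      LinearIndependent ℝ (fun i : Fin n => fun k : Fin n => (ξ i k : ℝ)) ∧
      ∀ i : Fin n, (i : ℕ) + 1 < n → ∑ k, (ξ i k : ℤ) * c k = 0 := by
  obtain ⟨p, hp⟩ := hpos
  obtain ⟨q, hq⟩ := hneg
  let σ := Equiv.swap p ⟨n - 1, by have := p.isLt; omega⟩
  refine ⟨nonnegBasisFamily c p q ∘ σ,
    (linearIndependent_nonnegBasisFamily c ℝ hp hq).comp σ σ.injective, fun i hi => ?_⟩
  have hσi : σ i ≠ p := by
    simp only [σ, Ne, Equiv.swap_apply_eq_iff, Equiv.swap_apply_left, Fin.ext_iff]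
    omega
  simpa [nonnegBasisFamily, hσi] using
    sum_balancingVector_mul_eq_zero c (mul_partner_nonpos c hp hq _)
end

section
/- With notation as in the weight grading: let E be a loose edge of a Newton polyhedron with primitive direction vector c, ξ_1,…,ξ_{n−1} ∈ ℕ^n linearly independent vectors orthogonal to E, R_v the span of monomials of weight v, and M ⊆ ℕ^{n−1} the set of weights z for which there exists α ∈ ℤ^n with ω(x^α) = z and ⟨ξ,α⟩ ≥ 0 for all ξ ∈ ℝ_{≥0}^n orthogonal to E. If w ∈ ℕ^{n−1} is such that R_w contains two coprime monomials, and z ∈ M, then dim R_{w+z} = dim R_w + dim R_z − 1. -/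
noncomputable section

open MvPolynomial

/-- The weight of a monomial exponent `α`, with respect to the vectors `ξ_1, …, ξ_n`. -/
def weightOf {n : ℕ} (ξ : Fin n → Fin (n+1) → ℕ) (α : Fin (n+1) →₀ ℕ) : Fin n → ℕ :=
  fun j => ∑ i, ξ j i * α i

/-- The graded piece `R_w` : the span of monomials of weight `w` in `K[x_1, …, x_{n+1}]`. -/
def Rw (K : Type*) [Field K] {n : ℕ} (ξ : Fin n → Fin (n+1) → ℕ) (w : Fin n → ℕ) :
    Submodule K (MvPolynomial (Fin (n+1)) K) :=
  Submodule.span K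
    {p | ∃ α : Fin (n+1) →₀ ℕ, weightOf ξ α = w ∧ p = MvPolynomial.monomial α (1 : K)}

/-- The monoid `M` of weights `z` admitting `α ∈ ℤ^{n+1}` with `ω(x^α) = z` and
`⟨η, α⟩ ≥ 0` for all `η ∈ ℝ_{≥0}^{n+1}` orthogonal to the edge direction `c`. -/
def weightSet {n : ℕ} (c : Fin (n+1) → ℤ) (ξ : Fin n → Fin (n+1) → ℕ) :
    Set (Fin n → ℕ) :=
  {z | ∃ α : Fin (n+1) → ℤ,
      (∀ j, ∑ i, (ξ j i : ℤ) * α i = (z j : ℤ)) ∧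
      ∀ η : Fin (n+1) → ℝ, (∀ i, 0 ≤ η i) → (∑ i, η i * (c i : ℝ)) = 0 →
        0 ≤ ∑ i, η i * (α i : ℝ)}

/-- The standing hypotheses on the primitive direction `c` of a loose edge and the
linearly independent weight vectors `ξ_1, …, ξ_n ∈ ℕ^{n+1}` orthogonal to it. -/
def GradingHyp {n : ℕ} (c : Fin (n+1) → ℤ) (ξ : Fin n → Fin (n+1) → ℕ) : Prop :=
  (∃ i, 0 < c i) ∧ (∃ i, c i < 0) ∧ Finset.univ.gcd c = 1 ∧
  LinearIndependent ℝ (fun j : Fin n => fun i : Fin (n+1) => (ξ j i : ℝ)) ∧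
  ∀ j, ∑ i, (ξ j i : ℤ) * c i = 0

/-- `G·R_w`, the image of `R_w` under multiplication by the polynomial `G`. -/
def mulRw {K : Type*} [Field K] {n : ℕ} (G : MvPolynomial (Fin (n+1)) K)
    (R : Submodule K (MvPolynomial (Fin (n+1)) K)) :
    Submodule K (MvPolynomial (Fin (n+1)) K) :=
  R.map (LinearMap.mulLeft K G)

/-!
Since the rows of `ξ` are independent and orthogonal to the primitive vector `c`, the integer
kernel of the weight map is `ℤ c`. So if `β ∈ ℤ^{n+1}` has weight `v`, the monomials of weight `v`
are the `x^{β + k c}` with `β + k c ≥ 0`, and `dim R_v` is the number of such `k ∈ ℤ`; since `c`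
has entries of both signs, these `k` form an interval `[L, U]`, where the coordinates with
`c_i > 0` give the lower bound and those with `c_i < 0` the upper bound.

Two coprime monomials of weight `w` must be `x^{m c⁻}` and `x^{m c⁺}` with `m > 0`, so
`dim R_w = m + 1`. If `γ` is a witness for `z ∈ M`, testing the cone condition on
`η = c_j e_i - c_i e_j` (`c_i < 0 < c_j`) shows that every `k ∈ ℤ` satisfies all the lower or all
the upper constraints for `γ`, i.e. `L ≤ U + 1`. Adding `m c⁻` to `γ` moves `U` to `U + m` and
leaves `L` alone, so `dim R_{w+z} = U + m + 1 - L = dim R_z + dim R_w - 1`.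
-/

open Set
open scoped Matrix

lemma Matrix.ker_mulVecLin_eq_span_singleton {K κ ι : Type*} [Field K] [Fintype κ] [Fintype ι]
    {M : Matrix κ ι K} (hM : LinearIndependent K M.row)
    (hcard : Fintype.card ι = Fintype.card κ + 1) {v : ι → K} (hv : v ≠ 0) (hMv : M *ᵥ v = 0) :
    LinearMap.ker M.mulVecLin = K ∙ v := by
  have hspan : (K ∙ v) ≤ LinearMap.ker M.mulVecLin :=
    (Submodule.span_singleton_le_iff_mem _ _).2 hMv
  refine (Submodule.eq_of_le_of_finrank_le hspan ?_).symm
  have := LinearMap.finrank_range_add_finrank_ker M.mulVecLin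
  rw [← Matrix.rank, hM.rank_matrix, Module.finrank_fintype_fun_eq_card, hcard] at this
  rw [finrank_span_singleton hv]
  omega

lemma exists_int_smul_of_real_smul {ι : Type*} [Fintype ι] {c d : ι → ℤ}
    (hc : Finset.univ.gcd c = 1) {t : ℝ} (h : ∀ i, (d i : ℝ) = t * c i) :
    ∃ k : ℤ, d = k • c := by
  -- Bézout: with `∑ i, c i * g i = 1`, the factor `t = ∑ i, d i * g i` is an integer.
  obtain ⟨g, hg⟩ := Finset.gcd_eq_sum_mul Finset.univ c
  refine ⟨∑ i, d i * g i, funext fun i => ?_⟩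
  have ht : ((∑ i, d i * g i : ℤ) : ℝ) = t := by
    have : ((∑ i, c i * g i : ℤ) : ℝ) = 1 := by rw [← hg, hc, Int.cast_one]
    push_cast at this ⊢
    simp only [h, mul_assoc, ← Finset.mul_sum, this, mul_one]
  have := h i
  rw [← ht] at this
  exact_mod_cast this

section Shifts

variable {ι : Type*} (c : ι → ℤ)

def nonnegShifts (β : ι → ℤ) : Set ℤ := {k | 0 ≤ β + k • c}

def lowerShifts (β : ι → ℤ) : Set ℤ := {k | ∀ i, 0 < c i → 0 ≤ β i + k * c i}

def upperShifts (β : ι → ℤ) : Set ℤ := {k | ∀ i, c i < 0 → 0 ≤ β i + k * c i}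

variable {c}

lemma nonnegShifts_eq_inter {β : ι → ℤ} (hβ : ∀ i, c i = 0 → 0 ≤ β i) :
    nonnegShifts c β = lowerShifts c β ∩ upperShifts c β := by
  ext k
  simp only [nonnegShifts, lowerShifts, upperShifts, mem_ofPred_eq, mem_inter_iff, Pi.le_def,
    Pi.zero_apply, Pi.add_apply, Pi.smul_apply, smul_eq_mul]
  refine ⟨fun h => ⟨fun i _ => h i, fun i _ => h i⟩, fun ⟨hl, hu⟩ i => ?_⟩
  rcases lt_trichotomy (c i) 0 with hc | hc | hc
  · exact hu i hc
  · simpa [hc] using hβ i hc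
  · exact hl i hc

lemma exists_lowerShifts_eq_Ici [Fintype ι] (β : ι → ℤ) (hc : ∃ i, 0 < c i) :
    ∃ L, lowerShifts c β = Ici L := by
  classical
  obtain ⟨i₀, hi₀⟩ := hc
  have hne : (Finset.univ.filter (0 < c ·)).Nonempty := ⟨i₀, by simpa using hi₀⟩
  refine ⟨(Finset.univ.filter (0 < c ·)).sup' hne fun i => -(β i / c i), ?_⟩
  ext k
  simp only [lowerShifts, mem_ofPred_eq, mem_Ici, Finset.sup'_le_iff, Finset.mem_filter,
    Finset.mem_univ, true_and]
  refine forall₂_congr fun i hi => ?_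
  rw [neg_le, Int.le_ediv_iff_mul_le hi]
  constructor <;> intro h <;> linarith

lemma upperShifts_eq_neg_lowerShifts (β : ι → ℤ) : upperShifts c β = -lowerShifts (-c) β := by
  ext k
  simp only [upperShifts, lowerShifts, mem_neg, mem_ofPred_eq, Pi.neg_apply, neg_pos, neg_mul_neg]

lemma exists_upperShifts_eq_Iic [Fintype ι] (β : ι → ℤ) (hc : ∃ i, c i < 0) :
    ∃ U, upperShifts c β = Iic U := by
  obtain ⟨L, hL⟩ := exists_lowerShifts_eq_Ici (c := -c) β (by simpa using hc)
  exact ⟨-L, by rw [upperShifts_eq_neg_lowerShifts, hL, neg_Ici]⟩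

lemma lowerShifts_add_smul_negPart (γ : ι → ℤ) (m : ℤ) :
    lowerShifts c (γ + m • c⁻) = lowerShifts c γ := by
  ext k
  refine forall₂_congr fun i hi => ?_
  simp [negPart_eq_zero.2 hi.le]

lemma upperShifts_add_smul_negPart (γ : ι → ℤ) (m : ℤ) :
    upperShifts c (γ + m • c⁻) = (· - m) ⁻¹' upperShifts c γ := by
  ext k
  refine forall₂_congr fun i hi => ?_
  simp only [Pi.add_apply, Pi.smul_apply, Pi.negPart_apply, negPart_eq_neg.2 hi.le, smul_eq_mul]
  ring_nf

lemma lowerShifts_zero (hc : ∃ i, 0 < c i) : lowerShifts c 0 = Ici 0 := by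
  obtain ⟨i₀, hi₀⟩ := hc
  ext k
  simp only [lowerShifts, Pi.zero_apply, zero_add, mem_ofPred_eq, mem_Ici]
  exact ⟨fun h => (mul_nonneg_iff_of_pos_right hi₀).1 (h i₀ hi₀),
    fun hk i hi => mul_nonneg hk hi.le⟩

lemma upperShifts_zero (hc : ∃ i, c i < 0) : upperShifts c 0 = Iic 0 := by
  rw [upperShifts_eq_neg_lowerShifts, lowerShifts_zero (by simpa using hc), neg_Ici, neg_zero]

lemma nonnegShifts_add_smul_negPart {γ : ι → ℤ} (hγ : ∀ i, c i = 0 → 0 ≤ γ i) {L U : ℤ}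
    (hL : lowerShifts c γ = Ici L) (hU : upperShifts c γ = Iic U) (m : ℤ) :
    nonnegShifts c (γ + m • c⁻) = Icc L (U + m) := by
  rw [nonnegShifts_eq_inter, lowerShifts_add_smul_negPart, upperShifts_add_smul_negPart, hL, hU,
    preimage_sub_const_Iic, Ici_inter_Iic]
  intro i hi
  simpa [hi] using hγ i hi

lemma le_add_one_of_Ici_union_Iic {L U : ℤ} (h : Ici L ∪ Iic U = univ) : L ≤ U + 1 := by
  by_contra! hlt
  have := h ▸ mem_univ (U + 1)
  simp only [mem_union, mem_Ici, mem_Iic] at this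
  omega

lemma natCard_nonnegShifts_add_smul_negPart [Fintype ι] (hpos : ∃ i, 0 < c i)
    (hneg : ∃ i, c i < 0) {γ : ι → ℤ} (hγ : ∀ i, c i = 0 → 0 ≤ γ i)
    (hcover : lowerShifts c γ ∪ upperShifts c γ = univ) {m : ℤ} (hm : 0 ≤ m) :
    Nat.card (nonnegShifts c (γ + m • c⁻)) + 1
      = Nat.card (nonnegShifts c (m • c⁻)) + Nat.card (nonnegShifts c γ) := by
  obtain ⟨L, hL⟩ := exists_lowerShifts_eq_Ici γ hpos
  obtain ⟨U, hU⟩ := exists_upperShifts_eq_Iic γ hneg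
  have hLU : L ≤ U + 1 := le_add_one_of_Ici_union_Iic (hL ▸ hU ▸ hcover)
  have hγm := nonnegShifts_add_smul_negPart hγ hL hU m
  have hγ0 := nonnegShifts_add_smul_negPart hγ hL hU 0
  have h0m := nonnegShifts_add_smul_negPart (γ := 0) (fun _ _ => le_rfl) (lowerShifts_zero hpos)
    (upperShifts_zero hneg) m
  rw [zero_smul, add_zero] at hγ0
  rw [zero_add] at h0m
  simp only [hγm, hγ0, h0m, ← Finset.coe_Icc, Nat.card_coe_set_eq, ncard_coe_finset,
    Int.card_Icc]
  omega

lemma lowerShifts_union_upperShifts {γ : ι → ℤ}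
    (h : ∀ i j, c i < 0 → 0 < c j → 0 ≤ c j * γ i - c i * γ j) :
    lowerShifts c γ ∪ upperShifts c γ = univ := by
  refine eq_univ_of_forall fun k => ?_
  by_contra hk
  simp only [lowerShifts, upperShifts, mem_union, mem_ofPred_eq, not_or, not_forall, not_le,
    exists_prop] at hk
  obtain ⟨⟨j, hj, hγj⟩, ⟨i, hi, hγi⟩⟩ := hk
  nlinarith [h i j hi hj]

lemma image_nonnegShifts {N : Type*} [AddCommGroup N] {f : (ι → ℤ) →ₗ[ℤ] N}
    (hker : ∀ d, f d = 0 ↔ ∃ k : ℤ, d = k • c) (β : ι → ℤ) :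
    (β + · • c) '' nonnegShifts c β = {x | 0 ≤ x ∧ f x = f β} := by
  ext x
  constructor
  · rintro ⟨k, hk, rfl⟩
    exact ⟨hk, by rw [map_add, (hker _).2 ⟨k, rfl⟩, add_zero]⟩
  · rintro ⟨hx, hfx⟩
    obtain ⟨k, hk⟩ := (hker (x - β)).1 (by rw [map_sub, hfx, sub_self])
    exact ⟨k, by rwa [nonnegShifts, mem_ofPred_eq, ← hk, add_sub_cancel],
      show β + k • c = x by rw [← hk, add_sub_cancel]⟩

end Shifts

lemma mul_add_mul_nonneg_of_dual {ι : Type*} [Fintype ι] [DecidableEq ι] {c γ : ι → ℤ}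
    (h : ∀ η : ι → ℝ, (∀ i, 0 ≤ η i) → ∑ i, η i * c i = 0 → 0 ≤ ∑ i, η i * γ i)
    {p q : ℤ} (hp : 0 ≤ p) (hq : 0 ≤ q) {i j : ι} (hpq : p * c i + q * c j = 0) :
    0 ≤ p * γ i + q * γ j := by
  set η : ι → ℝ := Pi.single i (p : ℝ) + Pi.single j (q : ℝ)
  have hη : ∀ x : ι → ℤ, ∑ t, η t * x t = ((p * x i + q * x j : ℤ) : ℝ) := fun x => by
    simp [η, add_mul, Finset.sum_add_distrib, Pi.single_apply]
  have hη0 : ∀ t, 0 ≤ η t := fun t => by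
    simp only [η, Pi.add_apply, Pi.single_apply]
    split_ifs <;> positivity
  exact_mod_cast hη γ ▸ h η hη0 (by rw [hη, hpq, Int.cast_zero])

lemma negPart_mul_eq_of_min_eq_zero {x y m c : ℤ} (hx : 0 ≤ x) (hy : 0 ≤ y) (hxy : min x y = 0)
    (hm : 0 < m) (h : y = x + m * c) : x = m * c⁻ := by
  rcases lt_or_ge c 0 with hc | hc
  · rw [negPart_eq_neg.2 hc.le, mul_neg]
    have := mul_neg_of_pos_of_neg hm hc
    omega
  · rw [negPart_eq_zero.2 hc, mul_zero]
    have := mul_nonneg hm.le hc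
    omega

section Weights

variable {n : ℕ} (ξ : Fin n → Fin (n+1) → ℕ)

def intWeight : (Fin (n+1) → ℤ) →ₗ[ℤ] (Fin n → ℤ) :=
  (Matrix.of fun j i => (ξ j i : ℤ)).mulVecLin

lemma intWeight_apply (β : Fin (n+1) → ℤ) (j : Fin n) :
    intWeight ξ β j = ∑ i, (ξ j i : ℤ) * β i := rfl

lemma intWeight_natCast (α : Fin (n+1) →₀ ℕ) :
    intWeight ξ (fun i => (α i : ℤ)) = fun j => (weightOf ξ α j : ℤ) := by
  ext j
  simp [intWeight_apply, weightOf]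

def weightFiber (v : Fin n → ℕ) : Set (Fin (n+1) →₀ ℕ) := {α | weightOf ξ α = v}

lemma finrank_Rw_eq_natCard (K : Type*) [Field K] (v : Fin n → ℕ) :
    Module.finrank K (Rw K ξ v) = Nat.card (weightFiber ξ v) := by
  have hli : LinearIndependent K fun α : weightFiber ξ v => monomial α.1 (1 : K) :=
    (basisMonomials (Fin (n+1)) K).linearIndependent.comp _ Subtype.val_injective
  have hRw :
      Rw K ξ v = Submodule.span K (range fun α : weightFiber ξ v => monomial α.1 (1 : K)) := by
    rw [Rw]
    congr
    ext p
    simp [weightFiber, eq_comm]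
  rw [hRw, Module.finrank, rank_span hli, ← Nat.card_range_of_injective hli.injective]
  rfl

lemma image_natCast_weightFiber (v : Fin n → ℕ) :
    (fun α i => (α i : ℤ)) '' weightFiber ξ v =
      {x | 0 ≤ x ∧ intWeight ξ x = fun j => (v j : ℤ)} := by
  ext x
  constructor
  · rintro ⟨α, hα, rfl⟩
    exact ⟨fun i => Int.natCast_nonneg _, by rw [intWeight_natCast, hα]⟩
  · rintro ⟨hx, hxv⟩
    set α : Fin (n+1) →₀ ℕ := Finsupp.equivFunOnFinite.symm fun i => (x i).toNat
    have hαx : (fun i => (α i : ℤ)) = x := funext fun i => by simp [α, Int.toNat_of_nonneg (hx i)]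
    refine ⟨α, funext fun j => ?_, hαx⟩
    have := congrFun (intWeight_natCast ξ α) j
    rw [hαx, hxv] at this
    simp only at this
    exact_mod_cast this.symm

variable {ξ}

lemma intWeight_eq_zero_iff {c : Fin (n+1) → ℤ}
    (hli : LinearIndependent ℝ fun j i => (ξ j i : ℝ)) (hgcd : Finset.univ.gcd c = 1)
    (hc : intWeight ξ c = 0) (d : Fin (n+1) → ℤ) :
    intWeight ξ d = 0 ↔ ∃ k : ℤ, d = k • c := by
  refine ⟨fun hd => ?_, fun ⟨k, hk⟩ => by rw [hk, map_zsmul, hc, smul_zero]⟩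
  have hcast : ∀ e : Fin (n+1) → ℤ, intWeight ξ e = 0 →
      (Matrix.of fun j i => (ξ j i : ℝ)) *ᵥ (fun i => (e i : ℝ)) = 0 := fun e he => by
    ext j
    simpa [Matrix.mulVec, dotProduct, intWeight_apply] using
      congrArg (fun x : ℤ => (x : ℝ)) (congrFun he j)
  have hc0 : (fun i => (c i : ℝ)) ≠ 0 := fun h0 => by
    have : Finset.univ.gcd c = 0 :=
      Finset.gcd_eq_zero_iff.2 fun i _ => by simpa using congrFun h0 i
    omega
  have hd' := hcast d hd
  rw [← Matrix.mulVecLin_apply, ← LinearMap.mem_ker,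
    Matrix.ker_mulVecLin_eq_span_singleton (M := Matrix.of fun j i => (ξ j i : ℝ)) hli (by simp)
      hc0 (hcast c hc),
    Submodule.mem_span_singleton] at hd'
  obtain ⟨t, ht⟩ := hd'
  exact exists_int_smul_of_real_smul hgcd fun i => by simpa using (congrFun ht i).symm

lemma natCard_weightFiber {c β : Fin (n+1) → ℤ}
    (hker : ∀ d, intWeight ξ d = 0 ↔ ∃ k : ℤ, d = k • c) (hc : c ≠ 0) {v : Fin n → ℕ}
    (hβ : intWeight ξ β = fun j => (v j : ℤ)) :
    Nat.card (weightFiber ξ v) = Nat.card (nonnegShifts c β) := by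
  have hcast : Function.Injective fun (α : Fin (n+1) →₀ ℕ) i => (α i : ℤ) :=
    fun a b h => Finsupp.ext fun i => by simpa using congrFun h i
  have hshift : Function.Injective (β + · • c) :=
    (add_right_injective β).comp (smul_left_injective ℤ hc)
  rw [← Nat.card_image_of_injective hcast, image_natCast_weightFiber, ← hβ,
    ← image_nonnegShifts hker, Nat.card_image_of_injective hshift]

lemma exists_smul_negPart_of_coprime {c : Fin (n+1) → ℤ}
    (hker : ∀ d, intWeight ξ d = 0 ↔ ∃ k : ℤ, d = k • c) {w : Fin n → ℕ}
    {a b : Fin (n+1) →₀ ℕ} (hab : a ≠ b) (ha : weightOf ξ a = w) (hb : weightOf ξ b = w)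
    (hmin : ∀ i, min (a i) (b i) = 0) :
    ∃ m : ℤ, 0 < m ∧ intWeight ξ (m • c⁻) = fun j => (w j : ℤ) := by
  have key : ∀ {x y : Fin (n+1) →₀ ℕ} {m : ℤ}, 0 < m → (∀ i, min (x i) (y i) = 0) →
      weightOf ξ x = w → (fun i => (y i : ℤ)) - (fun i => (x i : ℤ)) = m • c →
      intWeight ξ (m • c⁻) = fun j => (w j : ℤ) := by
    intro x y m hm hxy hx h
    have : m • c⁻ = fun i => (x i : ℤ) := funext fun i => by
      have hi := congrFun h i
      simp only [Pi.sub_apply, Pi.smul_apply, smul_eq_mul] at hi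
      exact (negPart_mul_eq_of_min_eq_zero (Int.natCast_nonneg _) (Int.natCast_nonneg (y i))
        (by have := hxy i; omega) hm (by linarith)).symm
    rw [this, intWeight_natCast, hx]
  obtain ⟨m, hm⟩ := (hker ((fun i => (b i : ℤ)) - fun i => (a i : ℤ))).1
    (by rw [map_sub, intWeight_natCast, intWeight_natCast, ha, hb, sub_self])
  rcases lt_trichotomy m 0 with hneg | rfl | hpos
  · exact ⟨-m, by omega, key (by omega) (fun i => by rw [min_comm]; exact hmin i) hb
      (by rw [neg_smul, ← hm, neg_sub])⟩
  · refine absurd (Finsupp.ext fun i => ?_) hab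
    have := congrFun hm i
    simp only [zero_smul, Pi.sub_apply, Pi.zero_apply, sub_eq_zero] at this
    exact_mod_cast this.symm
  · exact ⟨m, hpos, key hpos hmin ha hm⟩

lemma exists_intWeight_eq_of_mem_weightSet {c : Fin (n+1) → ℤ} {z : Fin n → ℕ}
    (hz : z ∈ weightSet c ξ) :
    ∃ γ, intWeight ξ γ = (fun j => (z j : ℤ)) ∧ (∀ i, c i = 0 → 0 ≤ γ i) ∧
      lowerShifts c γ ∪ upperShifts c γ = univ := by
  classical
  obtain ⟨γ, hγz, hγ⟩ := hz
  refine ⟨γ, funext hγz, fun i hi => ?_, lowerShifts_union_upperShifts fun i j hi hj => ?_⟩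
  · simpa using mul_add_mul_nonneg_of_dual hγ zero_le_one le_rfl (i := i) (j := i) (by simp [hi])
  · simpa [sub_eq_add_neg, mul_comm] using
      mul_add_mul_nonneg_of_dual hγ hj.le (neg_nonneg.2 hi.le) (i := i) (j := j) (by ring)

end Weights

/-- Lemma 4: if `R_w` contains two coprime monomials and `z ∈ M`, then
`dim R_{w+z} = dim R_w + dim R_z - 1`. -/
theorem finrank_Rw_add {K : Type*} [Field K] {n : ℕ}
    (c : Fin (n+1) → ℤ) (ξ : Fin n → Fin (n+1) → ℕ)
    (hyp : GradingHyp c ξ) (w : Fin n → ℕ) (z : Fin n → ℕ)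
    (hz : z ∈ weightSet c ξ)
    (hw : ∃ a b : Fin (n+1) →₀ ℕ, a ≠ b ∧ weightOf ξ a = w ∧ weightOf ξ b = w ∧
      ∀ i, min (a i) (b i) = 0) :
    Module.finrank K (Rw K ξ (w + z)) + 1
      = Module.finrank K (Rw K ξ w) + Module.finrank K (Rw K ξ z) := by
  obtain ⟨hpos, hneg, hgcd, hli, hcort⟩ := hyp
  have hker := intWeight_eq_zero_iff hli hgcd (funext hcort)
  have hc : c ≠ 0 := fun h0 => by
    obtain ⟨i, hi⟩ := hpos
    simp [h0] at hi
  obtain ⟨a, b, hab, ha, hb, hmin⟩ := hw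
  obtain ⟨m, hm, hwm⟩ := exists_smul_negPart_of_coprime hker hab ha hb hmin
  obtain ⟨γ, hγz, hγ0, hcover⟩ := exists_intWeight_eq_of_mem_weightSet hz
  have hwz : intWeight ξ (γ + m • c⁻) = fun j => ((w + z) j : ℤ) := by
    rw [map_add, hγz, hwm]
    ext j
    simp [add_comm]
  simp only [finrank_Rw_eq_natCard, natCard_weightFiber hker hc hwz,
    natCard_weightFiber hker hc hwm, natCard_weightFiber hker hc hγz]
  exact natCard_nonnegShifts_add_smul_negPart hpos hneg hγ0 hcover hm.le
end
end

section
/- Let E be a descendant loose edge (parallel to a vector c with c_i ≥ 0 for i < n and c_n < 0), with the associated weight grading R_v and monoid M. Let G ∈ R_w and H ∈ R_z be coprime polynomials with G monic in x_n. Then for every i ∈ M, G·R_{z+i} + H·R_{w+i} = R_{w+z+i}. -/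
noncomputable section

open MvPolynomial

/-- The direction `c` is descendant: `c_i ≥ 0` for `i < n+1` last coordinate negative. -/
def IsDescendantDir {n : ℕ} (c : Fin (n+1) → ℤ) : Prop :=
  (∀ i : Fin n, 0 ≤ c i.castSucc) ∧ c (Fin.last n) < 0

/-- `G` is monic with respect to the last variable: the coefficient of the highest power
of `x_{n+1}` occurring in `G` (as a polynomial in `x_{n+1}`) is the constant `1`. -/
def MonicInLast {K : Type*} [Field K] {n : ℕ} (G : MvPolynomial (Fin (n+1)) K) : Prop :=
  ∃ d : ℕ, G.coeff (Finsupp.single (Fin.last n) d) = 1 ∧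
    ∀ α ∈ G.support, α (Fin.last n) ≤ d ∧
      (α (Fin.last n) = d → α = Finsupp.single (Fin.last n) d)

/-!
The integer kernel of the weight map is `ℤ c`, so the monomials of `R_v` are the `x^{δ + k c}`,
for any integer exponent `δ` of weight `v` and all `k ∈ ℤ` with `δ + k c ≥ 0`. For a descendant
direction these `k` form the interval `[l, ⌊δ_last / -c_last⌋]`, where `l` depends only on the
first `n` coordinates of `δ`. Since `x_last` cannot divide both `G` and `H`, `c_last` divides the
exponent `d` of the monomial `x_last^d` of `G` or the `x_last`-exponent of some monomial of `H`;
either way the four intervals attached to `R_i`, `R_{w+i}`, `R_{z+i}`, `R_{w+z+i}` give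
`dim R_{w+z+i} + dim R_i = dim R_{z+i} + dim R_{w+i}`. The condition `i ∈ M` provides an
exponent `α` of weight `i` whose interval satisfies `l ≤ ⌊α_last / -c_last⌋ + 1`, so that none of
the four counts is truncated at zero. Finally `G·R_{z+i} ∩ H·R_{w+i} ⊆ GH·R_i` by coprimality,
and counting dimensions turns the inclusion `G·R_{z+i} + H·R_{w+i} ⊆ R_{w+z+i}` into an equality.
-/

open Matrix

namespace DirectSum

variable {ι A σ : Type*} [DecidableEq ι] [AddLeftCancelMonoid ι] [Ring A] [NoZeroDivisors A]
  [SetLike σ A] [AddSubgroupClass σ A] (𝒜 : ι → σ) [GradedRing 𝒜]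

theorem mem_of_mul_mem_add {i j : ι} {a b : A} (ha : a ∈ 𝒜 i) (ha0 : a ≠ 0)
    (hab : a * b ∈ 𝒜 (i + j)) : b ∈ 𝒜 j := by
  have hcomp : ∀ k, k ≠ j → (decompose 𝒜 b k : A) = 0 := fun k hk =>
    (mul_eq_zero.mp <| by
      rw [← coe_decompose_mul_add_of_left_mem 𝒜 ha,
        decompose_of_mem_ne 𝒜 hab (by simpa using hk.symm)]).resolve_left ha0
  have hb : decompose 𝒜 b = of (fun k => 𝒜 k) j (decompose 𝒜 b j) := by
    ext k
    by_cases hk : k = j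
    · subst hk; simp
    · rw [of_eq_of_ne _ _ _ hk, hcomp k hk, ZeroMemClass.coe_zero]
  rw [← (decompose 𝒜).symm_apply_apply b, hb, decompose_symm_of]
  exact SetLike.coe_mem _

end DirectSum

theorem mul_add_mul_nonneg_of_mem_dual {ι : Type*} [Fintype ι] [DecidableEq ι] {c α : ι → ℤ}
    (hα : ∀ η : ι → ℝ, (∀ i, 0 ≤ η i) → (∑ i, η i * (c i : ℝ)) = 0 →
      0 ≤ ∑ i, η i * (α i : ℝ))
    {i j : ι} {a b : ℤ} (ha : 0 ≤ a) (hb : 0 ≤ b) (hab : a * c i + b * c j = 0) :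
    0 ≤ a * α i + b * α j := by
  set η : ι → ℝ := Pi.single i (a : ℝ) + Pi.single j (b : ℝ)
  have key : ∀ x : ι → ℤ, ∑ l, η l * (x l : ℝ) = a * x i + b * x j := fun x => by
    simp [η, add_mul, Finset.sum_add_distrib, Pi.single_apply]
  have hη : 0 ≤ η :=
    add_nonneg (Pi.single_nonneg.2 (Int.cast_nonneg ha)) (Pi.single_nonneg.2 (Int.cast_nonneg hb))
  have := hα _ hη (by rw [key]; exact_mod_cast hab)
  rw [key] at this
  exact_mod_cast this

theorem finite_setOf_forall_nonneg_add_mul {ι : Type*} {c δ : ι → ℤ} {i₀ i₁ : ι}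
    (h₀ : 0 < c i₀) (h₁ : c i₁ < 0) : {k : ℤ | ∀ i, 0 ≤ δ i + k * c i}.Finite := by
  refine (Set.finite_Icc (-|δ i₀|) |δ i₁|).subset fun k hk => ⟨?_, ?_⟩
  · nlinarith [hk i₀, neg_abs_le (δ i₀), le_abs_self (δ i₀)]
  · nlinarith [hk i₁, neg_abs_le (δ i₁), le_abs_self (δ i₁)]

theorem exists_forall_nonneg_add_mul_iff_le {ι : Type*} [Fintype ι] {c δ : ι → ℤ}
    (hc : ∀ i, 0 ≤ c i) {i₀ : ι} (h₀ : 0 < c i₀) (hδ : ∀ i, c i = 0 → 0 ≤ δ i) :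
    ∃ l : ℤ, ∀ k, (∀ i, 0 ≤ δ i + k * c i) ↔ l ≤ k := by
  have hsum : ∀ i, |δ i| ≤ ∑ j, |δ j| := fun i =>
    Finset.single_le_sum (fun j _ => abs_nonneg (δ j)) (Finset.mem_univ i)
  obtain ⟨l, hl, hmin⟩ := Int.exists_least_of_bdd (P := fun k => ∀ i, 0 ≤ δ i + k * c i)
    ⟨-|δ i₀|, fun k hk => by
      by_contra! hk₀
      have : k * c i₀ ≤ k * 1 := mul_le_mul_of_nonpos_left h₀ (by linarith [abs_nonneg (δ i₀)])
      linarith [hk i₀, le_abs_self (δ i₀)]⟩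
    ⟨∑ j, |δ j|, fun i => by
      rcases (hc i).eq_or_lt with h | h
      · simpa [← h] using hδ i h.symm
      · nlinarith [hsum i, neg_abs_le (δ i), abs_nonneg (δ i)]⟩
  exact ⟨l, fun k => ⟨hmin k, fun hk i => by nlinarith [hl i, hc i]⟩⟩

theorem Int.ediv_add_ediv_eq_of_dvd_or_dvd {a b d e : ℤ} (h : e ∣ d ∨ e ∣ b) :
    (d + (b + a)) / e + a / e = (b + a) / e + (d + a) / e := by
  rcases eq_or_ne e 0 with rfl | he
  · simp
  rcases h with ⟨q, rfl⟩ | ⟨q, rfl⟩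
  · rw [show e * q + (b + a) = b + a + e * q by ring, show e * q + a = a + e * q by ring,
      Int.add_mul_ediv_left _ _ he, Int.add_mul_ediv_left _ _ he]
    ring
  · rw [show d + (e * q + a) = d + a + e * q by ring, show e * q + a = a + e * q by ring,
      Int.add_mul_ediv_left _ _ he, Int.add_mul_ediv_left _ _ he]
    ring

theorem Int.card_Icc_add_card_Icc_eq {a b d e l L : ℤ} (he : 0 < e) (hb : 0 ≤ b) (hd : 0 ≤ d)
    (hLl : L ≤ l) (hl : l ≤ a / e + 1) (hdvd : e ∣ d ∨ e ∣ b) :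
    (Finset.Icc L ((d + (b + a)) / e)).card + (Finset.Icc l (a / e)).card =
      (Finset.Icc L ((b + a) / e)).card + (Finset.Icc l ((d + a) / e)).card := by
  have := Int.ediv_add_ediv_eq_of_dvd_or_dvd (a := a) hdvd
  have := Int.ediv_le_ediv he (show a ≤ d + a by omega)
  have := Int.ediv_le_ediv he (show a ≤ b + a by omega)
  have := Int.ediv_le_ediv he (show b + a ≤ d + (b + a) by omega)
  simp only [Int.card_Icc]
  omega

theorem X_dvd_of_forall_mem_support {σ R : Type*} [CommSemiring R] (s : σ)
    {P : MvPolynomial σ R} (h : ∀ α ∈ P.support, α s ≠ 0) : X s ∣ P := by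
  rw [← support_sum_monomial_coeff P]
  exact Finset.dvd_sum fun α hα => X_dvd_monomial.mpr (Or.inr (h α hα))

section Grading

variable {K : Type*} [Field K] {n : ℕ} {c : Fin (n+1) → ℤ} {ξ : Fin n → Fin (n+1) → ℕ}

/-- The degrees `deg x_i = (ξ_j i)_j ∈ ℕ^n`; `R_v` is the degree-`v` piece of this grading. -/
abbrev weightVec (ξ : Fin n → Fin (n+1) → ℕ) : Fin (n+1) → Fin n → ℕ := fun i j => ξ j i

theorem weightOf_eq_weight (α : Fin (n+1) →₀ ℕ) :
    weightOf ξ α = Finsupp.weight (weightVec ξ) α := by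
  ext j
  simp [weightOf, Finsupp.weight_apply, Finsupp.sum_fintype, mul_comm]

theorem Rw_eq_weightedHomogeneousSubmodule (v : Fin n → ℕ) :
    Rw K ξ v = weightedHomogeneousSubmodule K (weightVec ξ) v := by
  rw [weightedHomogeneousSubmodule_eq_finsupp_supported,
    AddMonoidAlgebra.supported_eq_span_single, Rw]
  congr 1
  ext p
  simp [weightOf_eq_weight, eq_comm, MvPolynomial.monomial]

theorem weightOf_eq_of_mem_support {v : Fin n → ℕ} {P : MvPolynomial (Fin (n+1)) K}
    (hP : P ∈ Rw K ξ v) {α : Fin (n+1) →₀ ℕ} (hα : α ∈ P.support) : weightOf ξ α = v := by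
  rw [Rw_eq_weightedHomogeneousSubmodule, mem_weightedHomogeneousSubmodule] at hP
  rw [weightOf_eq_weight]
  exact hP (mem_support_iff.mp hα)

theorem mul_mem_Rw {v v' : Fin n → ℕ} {P Q : MvPolynomial (Fin (n+1)) K}
    (hP : P ∈ Rw K ξ v) (hQ : Q ∈ Rw K ξ v') : P * Q ∈ Rw K ξ (v + v') := by
  rw [Rw_eq_weightedHomogeneousSubmodule] at *
  exact hP.mul hQ

theorem mem_Rw_of_mul_mem {v v' : Fin n → ℕ} {P Q : MvPolynomial (Fin (n+1)) K}
    (hP : P ∈ Rw K ξ v) (hP0 : P ≠ 0) (hPQ : P * Q ∈ Rw K ξ (v + v')) : Q ∈ Rw K ξ v' := by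
  classical
  let _ := weightedGradedAlgebra K (weightVec ξ)
  rw [Rw_eq_weightedHomogeneousSubmodule] at *
  exact DirectSum.mem_of_mul_mem_add _ hP hP0 hPQ

theorem finrank_Rw (v : Fin n → ℕ) :
    Module.finrank K (Rw K ξ v) = Nat.card {α // weightOf ξ α = v} := by
  rw [Rw_eq_weightedHomogeneousSubmodule, weightedHomogeneousSubmodule_eq_finsupp_supported,
    (AddMonoidAlgebra.supportedEquivFinsupp _).finrank_eq, Module.finrank, rank_finsupp_self,
    Cardinal.toNat_lift]
  simp only [weightOf_eq_weight]
  rfl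

theorem finiteDimensional_Rw {v : Fin n → ℕ} (h : Finite {α // weightOf ξ α = v}) :
    FiniteDimensional K (Rw K ξ v) := by
  rw [Rw_eq_weightedHomogeneousSubmodule, weightedHomogeneousSubmodule_eq_finsupp_supported]
  have : Finite {α | weightOf ξ α = v} := h
  simp only [weightOf_eq_weight] at this
  exact (AddMonoidAlgebra.supportedEquivFinsupp _).symm.finiteDimensional

def weightMatrix (ξ : Fin n → Fin (n+1) → ℕ) : Matrix (Fin n) (Fin (n+1)) ℤ :=
  Matrix.of fun j i => (ξ j i : ℤ)

theorem weightMatrix_mulVec_natCast (α : Fin (n+1) →₀ ℕ) :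
    weightMatrix ξ *ᵥ (fun i => (α i : ℤ)) = fun j => (weightOf ξ α j : ℤ) := by
  ext j
  simp [weightMatrix, mulVec, dotProduct, weightOf]

theorem GradingHyp.exists_eq_smul_of_mulVec_eq_zero (hyp : GradingHyp c ξ)
    {v : Fin (n+1) → ℤ} (hv : weightMatrix ξ *ᵥ v = 0) : ∃ k : ℤ, v = k • c := by
  obtain ⟨-, ⟨i₀, hi₀⟩, hgcd, hind, horth⟩ := hyp
  set A := (weightMatrix ξ).map (Int.castRingHom ℝ)
  have hker : ∀ u, weightMatrix ξ *ᵥ u = 0 →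
      (Int.cast ∘ u : Fin (n+1) → ℝ) ∈ LinearMap.ker A.mulVecLin := fun u hu => by
    ext j
    simpa [A, hu, Function.comp_def] using
      (RingHom.map_mulVec (Int.castRingHom ℝ) (weightMatrix ξ) u j).symm
  have hrank : Module.finrank ℝ (LinearMap.ker A.mulVecLin) = 1 := by
    have := LinearMap.finrank_range_add_finrank_ker A.mulVecLin
    have hA : A.rank = n := by simpa using LinearIndependent.rank_matrix (M := A) hind
    simp only [Matrix.rank] at hA
    simp [hA] at this
    omega
  have hc0 : (⟨_, hker c (funext horth)⟩ : LinearMap.ker A.mulVecLin) ≠ 0 := fun h => by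
    have := congrFun (congrArg Subtype.val h) i₀
    simp at this
    omega
  obtain ⟨r, hr⟩ := (finrank_eq_one_iff_of_nonzero' _ hc0).mp hrank ⟨_, hker v hv⟩
  have hr : ∀ i, r * c i = v i := fun i => by simpa using congrFun (congrArg Subtype.val hr) i
  -- `r` is an integer: Bézout gives `∑ c_i g_i = 1`, hence `r = ∑ v_i g_i`
  obtain ⟨g, hg⟩ := Finset.univ.gcd_eq_sum_mul c
  rw [hgcd] at hg
  have hrZ : r = ∑ i, v i * g i := by
    calc r = r * ((1 : ℤ) : ℝ) := by simp
      _ = ∑ i, (r * c i) * g i := by rw [hg]; push_cast; rw [Finset.mul_sum]; simp [mul_assoc]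
      _ = _ := by simp [hr]
  refine ⟨∑ i, v i * g i, funext fun i => ?_⟩
  have := hr i
  rw [hrZ] at this
  simp only [Pi.smul_apply, smul_eq_mul]
  exact_mod_cast this.symm

theorem GradingHyp.nonempty_equiv_weightFiber (hyp : GradingHyp c ξ) {v : Fin n → ℕ}
    {δ : Fin (n+1) → ℤ} (hδ : weightMatrix ξ *ᵥ δ = fun j => (v j : ℤ)) :
    Nonempty ({k : ℤ // ∀ i, 0 ≤ δ i + k * c i} ≃ {α // weightOf ξ α = v}) := by
  obtain ⟨-, ⟨i₁, hi₁⟩, -, -, horth⟩ := id hyp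
  have hc : weightMatrix ξ *ᵥ c = 0 := funext horth
  let f : {k : ℤ // ∀ i, 0 ≤ δ i + k * c i} → {α // weightOf ξ α = v} := fun k =>
    ⟨Finsupp.equivFunOnFinite.symm fun i => (δ i + k * c i).toNat, funext fun j => by
      have hcast : (fun i => ((δ i + k * c i).toNat : ℤ)) = δ + (k : ℤ) • c :=
        funext fun i => by simp [Int.toNat_of_nonneg (k.2 i)]
      have := congrFun (weightMatrix_mulVec_natCast (ξ := ξ)
        (Finsupp.equivFunOnFinite.symm fun i => (δ i + k * c i).toNat)) j
      simp only [Finsupp.coe_equivFunOnFinite_symm, hcast, mulVec_add, mulVec_smul, hδ, hc,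
        smul_zero, add_zero] at this
      exact_mod_cast this.symm⟩
  refine ⟨Equiv.ofBijective f ⟨fun k k' hkk' => ?_, fun α => ?_⟩⟩
  · have := congrArg (fun α : {α // weightOf ξ α = v} => (α.1 i₁ : ℤ)) hkk'
    simp only [f, Finsupp.coe_equivFunOnFinite_symm, Int.toNat_of_nonneg (k.2 i₁),
      Int.toNat_of_nonneg (k'.2 i₁)] at this
    exact Subtype.ext (mul_right_cancel₀ hi₁.ne (by linarith))
  · obtain ⟨k, hk⟩ := hyp.exists_eq_smul_of_mulVec_eq_zero (v := fun i => (α.1 i : ℤ) - δ i)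
      (by rw [← Pi.sub_def, mulVec_sub, weightMatrix_mulVec_natCast, α.2, hδ, sub_self])
    have hα : ∀ i, δ i + k * c i = α.1 i := fun i => by
      have := congrFun hk i
      simp only [Pi.smul_apply, smul_eq_mul] at this
      linarith
    exact ⟨⟨k, fun i => hα i ▸ Int.natCast_nonneg _⟩, Subtype.ext <| Finsupp.ext fun i => by
      simp [f, hα i]⟩

theorem GradingHyp.finite_weightFiber (hyp : GradingHyp c ξ) (v : Fin n → ℕ) :
    Finite {α // weightOf ξ α = v} := by
  rcases isEmpty_or_nonempty {α // weightOf ξ α = v} with h | ⟨α₀, hα₀⟩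
  · infer_instance
  obtain ⟨e⟩ := hyp.nonempty_equiv_weightFiber (δ := fun i => α₀ i)
    (by rw [weightMatrix_mulVec_natCast, hα₀])
  obtain ⟨⟨i₀, h₀⟩, ⟨i₁, h₁⟩, -⟩ := hyp
  have := (finite_setOf_forall_nonneg_add_mul (δ := fun i => (α₀ i : ℤ)) h₀ h₁).to_subtype
  exact @Finite.of_equiv _ _ this e

variable (K) in
theorem GradingHyp.finiteDimensional_Rw (hyp : GradingHyp c ξ) (v : Fin n → ℕ) :
    FiniteDimensional K (Rw K ξ v) :=
  _root_.finiteDimensional_Rw (hyp.finite_weightFiber v)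

theorem GradingHyp.X_dvd_of_not_dvd (hyp : GradingHyp c ξ) {v : Fin n → ℕ}
    {P : MvPolynomial (Fin (n+1)) K} (hP : P ∈ Rw K ξ v) {α₀ : Fin (n+1) →₀ ℕ}
    (hα₀ : weightOf ξ α₀ = v) {s : Fin (n+1)} (hs : ¬ c s ∣ α₀ s) : X s ∣ P := by
  refine X_dvd_of_forall_mem_support s fun α hα hαs => hs ?_
  obtain ⟨k, hk⟩ := hyp.exists_eq_smul_of_mulVec_eq_zero
    (v := fun i => (α i : ℤ) - α₀ i) (by
      rw [← Pi.sub_def, mulVec_sub, weightMatrix_mulVec_natCast, weightMatrix_mulVec_natCast,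
        weightOf_eq_of_mem_support hP hα, hα₀, sub_self])
  have := congrFun hk s
  simp only [hαs, Pi.smul_apply, smul_eq_mul] at this
  exact ⟨-k, by push_cast at this; linarith⟩

theorem GradingHyp.dvd_or_dvd_of_isRelPrime (hyp : GradingHyp c ξ) {w z : Fin n → ℕ}
    {G H : MvPolynomial (Fin (n+1)) K} (hG : G ∈ Rw K ξ w) (hH : H ∈ Rw K ξ z)
    (hcop : IsRelPrime G H) {a b : Fin (n+1) →₀ ℕ} (ha : a ∈ G.support) (hb : b ∈ H.support)
    (s : Fin (n+1)) : c s ∣ a s ∨ c s ∣ b s := by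
  by_contra! h
  exact (X_prime (R := K) (i := s)).not_isUnit <| hcop
    (hyp.X_dvd_of_not_dvd hG (weightOf_eq_of_mem_support hG ha) h.1)
    (hyp.X_dvd_of_not_dvd hH (weightOf_eq_of_mem_support hH hb) h.2)

variable (K) in
theorem finrank_Rw_eq_card_Icc (hyp : GradingHyp c ξ) (hlast : c (Fin.last n) < 0)
    {v : Fin n → ℕ} {δ : Fin (n+1) → ℤ} (hδ : weightMatrix ξ *ᵥ δ = fun j => (v j : ℤ))
    {l : ℤ} (hl : ∀ k, (∀ i : Fin n, 0 ≤ δ i.castSucc + k * c i.castSucc) ↔ l ≤ k) :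
    Module.finrank K (Rw K ξ v) = (Finset.Icc l (δ (Fin.last n) / -c (Fin.last n))).card := by
  obtain ⟨e⟩ := hyp.nonempty_equiv_weightFiber hδ
  rw [finrank_Rw, ← Nat.card_congr e, ← Nat.card_eq_finsetCard]
  refine Nat.card_congr (Equiv.subtypeEquivRight fun k => ?_)
  rw [Fin.forall_fin_succ', hl, Finset.mem_Icc, Int.le_ediv_iff_mul_le (by omega)]
  constructor <;> rintro ⟨h₁, h₂⟩ <;> exact ⟨h₁, by linarith⟩

theorem IsDescendantDir.le_ediv_add_one (hdesc : IsDescendantDir c) {α : Fin (n+1) → ℤ}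
    (hα : ∀ η : Fin (n+1) → ℝ, (∀ i, 0 ≤ η i) → (∑ i, η i * (c i : ℝ)) = 0 →
      0 ≤ ∑ i, η i * (α i : ℝ))
    {l : ℤ} (hl : ∀ k, (∀ i : Fin n, 0 ≤ α i.castSucc + k * c i.castSucc) ↔ l ≤ k) :
    l ≤ α (Fin.last n) / -c (Fin.last n) + 1 := by
  have he : 0 < -c (Fin.last n) := by linarith [hdesc.2]
  have hlt := Int.lt_ediv_add_one_mul_self (α (Fin.last n)) he
  refine (hl _).1 fun i => ?_
  have hcone := mul_add_mul_nonneg_of_mem_dual hα (i := i.castSucc) (j := Fin.last n)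
    he.le (hdesc.1 i) (by ring)
  nlinarith [hdesc.1 i]

variable (K) in
theorem finrank_Rw_add_finrank_Rw_eq (hyp : GradingHyp c ξ) (hdesc : IsDescendantDir c)
    {w z i : Fin n → ℕ} (hi : i ∈ weightSet c ξ) {d : ℕ}
    (hw : weightOf ξ (Finsupp.single (Fin.last n) d) = w) {β : Fin (n+1) →₀ ℕ}
    (hz : weightOf ξ β = z) (hdvd : c (Fin.last n) ∣ d ∨ c (Fin.last n) ∣ β (Fin.last n)) :
    Module.finrank K (Rw K ξ (w + z + i)) + Module.finrank K (Rw K ξ i) =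
      Module.finrank K (Rw K ξ (z + i)) + Module.finrank K (Rw K ξ (w + i)) := by
  obtain ⟨α, hαi, hcone⟩ := hi
  set γ : Fin (n+1) → ℤ := fun j => (Finsupp.single (Fin.last n) d j : ℤ)
  set b : Fin (n+1) → ℤ := fun j => (β j : ℤ)
  have hα : weightMatrix ξ *ᵥ α = fun j => (i j : ℤ) := funext hαi
  have hγ : weightMatrix ξ *ᵥ γ = fun j => (w j : ℤ) := by rw [weightMatrix_mulVec_natCast, hw]
  have hb : weightMatrix ξ *ᵥ b = fun j => (z j : ℤ) := by rw [weightMatrix_mulVec_natCast, hz]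
  have hγ₀ : ∀ j : Fin n, γ j.castSucc = 0 := fun j => by
    simp [γ, Finsupp.single_apply, (Fin.castSucc_lt_last j).ne']
  have hα₀ : ∀ j : Fin n, c j.castSucc = 0 → 0 ≤ α j.castSucc := fun j hj => by
    simpa [hj] using mul_add_mul_nonneg_of_mem_dual hcone (i := j.castSucc) (j := Fin.last n)
      zero_le_one le_rfl
  obtain ⟨j₀, hj₀⟩ := hyp.1
  obtain ⟨j₀, rfl⟩ := Fin.eq_castSucc_of_ne_last (x := j₀) (by rintro rfl; linarith [hdesc.2])
  obtain ⟨l, hl⟩ := exists_forall_nonneg_add_mul_iff_le (δ := fun j => α j.castSucc)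
    hdesc.1 hj₀ hα₀
  obtain ⟨L, hL⟩ := exists_forall_nonneg_add_mul_iff_le
    (δ := fun j => b j.castSucc + α j.castSucc) hdesc.1 hj₀
    fun j hj => add_nonneg (Int.natCast_nonneg _) (hα₀ j hj)
  have hLl : L ≤ l := (hL l).1 fun j => by
    have := (hl l).2 le_rfl j
    have : 0 ≤ b j.castSucc := Int.natCast_nonneg _
    linarith
  have hl₁ := hdesc.le_ediv_add_one hcone hl
  rw [finrank_Rw_eq_card_Icc K hyp hdesc.2 (δ := γ + (b + α)) (l := L)
      (by simp only [mulVec_add, hγ, hb, hα]; ext; simp only [Pi.add_apply]; push_cast; ring)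
      (by simpa [hγ₀] using hL),
    finrank_Rw_eq_card_Icc K hyp hdesc.2 hα hl,
    finrank_Rw_eq_card_Icc K hyp hdesc.2 (δ := b + α) (l := L)
      (by simp only [mulVec_add, hb, hα]; ext; simp only [Pi.add_apply]; push_cast; ring) hL,
    finrank_Rw_eq_card_Icc K hyp hdesc.2 (δ := γ + α) (l := l)
      (by simp only [mulVec_add, hγ, hα]; ext; simp only [Pi.add_apply]; push_cast; ring)
      (by simpa [hγ₀] using hl)]
  exact Int.card_Icc_add_card_Icc_eq (by linarith [hdesc.2]) (Int.natCast_nonneg _)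
    (Int.natCast_nonneg _) hLl hl₁ (by simpa [γ, b, neg_dvd] using hdvd)

instance (G : MvPolynomial (Fin (n+1)) K) (R : Submodule K (MvPolynomial (Fin (n+1)) K))
    [FiniteDimensional K R] : FiniteDimensional K (mulRw G R) :=
  Module.Finite.map _ _

theorem finrank_mulRw {G : MvPolynomial (Fin (n+1)) K} (hG : G ≠ 0)
    (R : Submodule K (MvPolynomial (Fin (n+1)) K)) :
    Module.finrank K (mulRw G R) = Module.finrank K R :=
  (Submodule.equivMapOfInjective _ (mul_right_injective₀ hG) R).finrank_eq.symm

theorem mulRw_le_Rw {w v : Fin n → ℕ} {G : MvPolynomial (Fin (n+1)) K} (hG : G ∈ Rw K ξ w) :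
    mulRw G (Rw K ξ v) ≤ Rw K ξ (w + v) :=
  Submodule.map_le_iff_le_comap.mpr fun _ hP => mul_mem_Rw hG hP

theorem mulRw_inf_mulRw_le {w z i : Fin n → ℕ} {G H : MvPolynomial (Fin (n+1)) K}
    (hH : H ∈ Rw K ξ z) (hH0 : H ≠ 0) (hcop : IsRelPrime G H) :
    mulRw G (Rw K ξ (z + i)) ⊓ mulRw H (Rw K ξ (w + i)) ≤ mulRw (G * H) (Rw K ξ i) := by
  rintro _ ⟨⟨A, hA, rfl⟩, ⟨B, -, hBA⟩⟩
  simp only [LinearMap.mulLeft_apply] at hBA ⊢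
  obtain ⟨C, rfl⟩ := hcop.symm.dvd_of_dvd_mul_left ⟨B, hBA.symm⟩
  exact ⟨C, mem_Rw_of_mul_mem hH hH0 hA, by simp only [LinearMap.mulLeft_apply]; ring⟩

theorem mulRw_sup_mulRw_eq_of_finrank_le [∀ v, FiniteDimensional K (Rw K ξ v)]
    {w z i : Fin n → ℕ} {G H : MvPolynomial (Fin (n+1)) K} (hG : G ∈ Rw K ξ w)
    (hH : H ∈ Rw K ξ z) (hG0 : G ≠ 0) (hH0 : H ≠ 0) (hcop : IsRelPrime G H)
    (hdim : Module.finrank K (Rw K ξ (w + z + i)) + Module.finrank K (Rw K ξ i) ≤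
      Module.finrank K (Rw K ξ (z + i)) + Module.finrank K (Rw K ξ (w + i))) :
    mulRw G (Rw K ξ (z + i)) ⊔ mulRw H (Rw K ξ (w + i)) = Rw K ξ (w + z + i) := by
  have hle : mulRw G (Rw K ξ (z + i)) ⊔ mulRw H (Rw K ξ (w + i)) ≤ Rw K ξ (w + z + i) :=
    sup_le ((mulRw_le_Rw hG).trans_eq (by rw [add_assoc]))
      ((mulRw_le_Rw hH).trans_eq (by rw [add_left_comm, add_assoc]))
  have hinf := (Submodule.finrank_mono (mulRw_inf_mulRw_le (w := w) (i := i) hH hH0 hcop)).trans_eq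
    (finrank_mulRw (mul_ne_zero hG0 hH0) _)
  have hsum := Submodule.finrank_sup_add_finrank_inf_eq
    (mulRw G (Rw K ξ (z + i))) (mulRw H (Rw K ξ (w + i)))
  rw [finrank_mulRw hG0, finrank_mulRw hH0] at hsum
  exact Submodule.eq_of_le_of_finrank_le hle (by omega)

theorem mulRw_eq_of_isUnit {G : MvPolynomial (Fin (n+1)) K} (hG : IsUnit G)
    (R : Submodule K (MvPolynomial (Fin (n+1)) K)) : mulRw G R = R := by
  obtain ⟨a, ha, rfl⟩ := isUnit_iff_eq_C_of_isReduced.mp hG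
  have : LinearMap.mulLeft K (C a : MvPolynomial (Fin (n+1)) K) = a • LinearMap.id := by
    ext; simp [C_mul']
  rw [mulRw, this, Submodule.map_smul _ _ _ ha.ne_zero, Submodule.map_id]

theorem eq_zero_of_isUnit_mem_Rw {w : Fin n → ℕ} {G : MvPolynomial (Fin (n+1)) K}
    (hG : IsUnit G) (hGw : G ∈ Rw K ξ w) : w = 0 := by
  obtain ⟨a, ha, rfl⟩ := isUnit_iff_eq_C_of_isReduced.mp hG
  rw [← weightOf_eq_of_mem_support hGw (α := 0) (by simp [ha.ne_zero])]
  ext; simp [weightOf]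

end Grading

/-- Lemma 7: for a descendant loose edge, if `G ∈ R_w` and `H ∈ R_z` are coprime and `G`
is monic in the last variable, then `G·R_{z+i} + H·R_{w+i} = R_{w+z+i}` for all `i ∈ M`. -/
theorem mul_add_Rw_eq_monic {K : Type*} [Field K] {n : ℕ}
    (c : Fin (n+1) → ℤ) (ξ : Fin n → Fin (n+1) → ℕ)
    (hyp : GradingHyp c ξ) (hdesc : IsDescendantDir c)
    (w z : Fin n → ℕ) (G H : MvPolynomial (Fin (n+1)) K)
    (hG : G ∈ Rw K ξ w) (hH : H ∈ Rw K ξ z)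
    (hcop : IsRelPrime G H) (hmonic : MonicInLast G) :
    ∀ i ∈ weightSet c ξ,
      mulRw G (Rw K ξ (z + i)) ⊔ mulRw H (Rw K ξ (w + i)) = Rw K ξ (w + z + i) := by
  intro i hi
  obtain ⟨d, hd, -⟩ := hmonic
  have hdG : Finsupp.single (Fin.last n) d ∈ G.support := by simp [hd]
  rcases eq_or_ne H 0 with rfl | hH0
  · have hu := isRelPrime_zero_right.mp hcop
    rw [mulRw_eq_of_isUnit hu, mulRw, LinearMap.mulLeft_zero_eq_zero, Submodule.map_zero,
      sup_bot_eq, eq_zero_of_isUnit_mem_Rw hu hG, zero_add]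
  obtain ⟨β, hβ⟩ := support_nonempty.mpr hH0
  have := hyp.finiteDimensional_Rw K
  refine mulRw_sup_mulRw_eq_of_finrank_le hG hH (by rintro rfl; simp at hd) hH0 hcop
    (finrank_Rw_add_finrank_Rw_eq K hyp hdesc hi (weightOf_eq_of_mem_support hG hdG)
      (weightOf_eq_of_mem_support hH hβ) ?_).le
  simpa using hyp.dvd_or_dvd_of_isRelPrime hG hH hcop hdG hβ (Fin.last n)
end
end

section
/- Fix a weight ω(x^i y^j) = n·i + m·j with n, m positive integers, and let F ∈ K[[x,y]] be nonzero with decomposition F = F_{a+b} + F_{a+b+1} + ⋯ into ω-quasihomogeneous forms (subscripts denote ω-weight). If F_{a+b} = f_a·g_b where f_a, g_b ∈ K[x,y] are quasihomogeneous of weights a and b and coprime, then there exist f = f_a + f_{a+1} + ⋯ and g = g_b + g_{b+1} + ⋯ in K[[x,y]] with F = f·g. Moreover, if f_a is irreducible as a polynomial, then f is irreducible as a power series. -/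
/-!
The heart of the proof is a weighted Macaulay lemma in `K[x, y]`: if `f`, `g` are coprime and
weighted homogeneous of weights `a`, `b`, every weighted homogeneous `h` of weight `d ≥ a + b` is
`u * f + v * g` with `u`, `v` weighted homogeneous of weights `d - a`, `d - b`. Modulo `x` a
weighted homogeneous polynomial is a multiple of a single power of `y`, so when `x ∤ f` one can
subtract a multiple of `f` from `h` (or from `g`, if `a ≤ b`) to make it divisible by `x`; this
replaces one generator by `x` times a coprime generator of smaller weight, and the lemma follows by
induction on `a + b`.

Writing `f = f_a + u₁ + u₂ + ⋯` and `g = g_b + v₁ + v₂ + ⋯`, the weight `a + b + k` part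
of `F = f * g` reads `F_{a+b+k} = ∑_{i+j=k} uᵢ vⱼ`, in which the new unknowns enter only
through `u_k g_b + f_a v_k`; the lemma solves for them one weight at a time. Finally, a
factorization `f = p * q` induces `f_a = p_{dp} * q_{dq}` on lowest weight components, so if
`f_a` is irreducible one of these components, hence one of `p`, `q`, has a nonzero constant term.
-/

noncomputable section

open Classical in
/-- The `ω`-quasihomogeneous component of weight `d` of a power series in two variables,
for the weight `ω(x^i y^j) = nw·i + mw·j`. -/
def qhComponent (K : Type*) [Field K] (nw mw d : ℕ) (F : MvPowerSeries (Fin 2) K) :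
    MvPowerSeries (Fin 2) K :=
  fun α : Fin 2 →₀ ℕ =>
    if nw * α 0 + mw * α 1 = d then MvPowerSeries.coeff α F else 0

/-- The weight function on the two variables. -/
def qhWeight (nw mw : ℕ) : Fin 2 → ℕ := fun i => if i = 0 then nw else mw

open Finsupp Finset.HasAntidiagonal

namespace MvPolynomial

variable {σ : Type*} {w : σ → ℕ}

section CommSemiring

variable {R : Type*} [CommSemiring R]

theorem IsWeightedHomogeneous.weightedHomogeneousComponent_mul_left {p : MvPolynomial σ R}
    {a : ℕ} (hp : p.IsWeightedHomogeneous w a) (q : MvPolynomial σ R) (e : ℕ) :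
    weightedHomogeneousComponent w (a + e) (p * q) = p * weightedHomogeneousComponent w e q := by
  classical
  let _ := weightedGradedAlgebra R w
  simpa [← weightedDecomposition.decompose'_apply] using
    DirectSum.coe_decompose_mul_add_of_left_mem (weightedHomogeneousSubmodule R w) (j := e)
      (b := q) hp

theorem IsWeightedHomogeneous.coe {p : MvPolynomial σ R} {d : ℕ}
    (hp : p.IsWeightedHomogeneous w d) : (p : MvPowerSeries σ R).IsWeightedHomogeneous w d :=
  fun hα => hp (by rwa [coeff_coe] at hα)

theorem X_dvd_iff_coeff_eq_zero {i : σ} {p : MvPolynomial σ R} :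
    X i ∣ p ↔ ∀ α : σ →₀ ℕ, α i = 0 → coeff α p = 0 := by
  rw [X_dvd_iff_modMonomial_eq_zero, MvPolynomial.ext_iff]
  refine forall_congr' fun α => ?_
  by_cases hα : α i = 0
  · rw [coeff_modMonomial_of_not_le _ (by simp [single_le_iff, hα])]
    simp [hα]
  · simp [hα, coeff_modMonomial_of_le _ (single_le_iff.mpr (Nat.one_le_iff_ne_zero.mpr hα))]

theorem X_zero_dvd_iff {p : MvPolynomial (Fin 2) R} :
    X 0 ∣ p ↔ ∀ j, coeff (single 1 j) p = 0 := by
  rw [X_dvd_iff_coeff_eq_zero]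
  refine ⟨fun h j => h _ (by simp), fun h α hα => ?_⟩
  convert h (α 1)
  ext i
  fin_cases i <;> simp [hα]

variable [NoZeroDivisors R] {p q : MvPolynomial σ R} {a d : ℕ}

theorem IsWeightedHomogeneous.of_mul_left (hp : p.IsWeightedHomogeneous w a) (hp0 : p ≠ 0)
    (hpq : (p * q).IsWeightedHomogeneous w d) : q.IsWeightedHomogeneous w (d - a) := by
  intro α hα
  have hcomp : weightedHomogeneousComponent w (weight w α) q ≠ 0 := fun h => hα <| by
    simpa [coeff_weightedHomogeneousComponent] using congr_arg (coeff α) h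
  have : a + weight w α = d := by
    by_contra hne
    apply mul_ne_zero hp0 hcomp
    rw [← hp.weightedHomogeneousComponent_mul_left]
    exact hpq.weightedHomogeneousComponent_ne _ hne
  omega

theorem IsWeightedHomogeneous.le_of_mul_left (hp : p.IsWeightedHomogeneous w a) (hp0 : p ≠ 0)
    (hq0 : q ≠ 0) (hpq : (p * q).IsWeightedHomogeneous w d) : a ≤ d := by
  have h := (hp.mul (hp.of_mul_left hp0 hpq)).inj_right (mul_ne_zero hp0 hq0) hpq
  omega

variable [Nontrivial R]

theorem IsWeightedHomogeneous.of_X_mul {i : σ} (hq : (X i * q).IsWeightedHomogeneous w d) :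
    q.IsWeightedHomogeneous w (d - w i) :=
  (isWeightedHomogeneous_X R w i).of_mul_left (X_ne_zero i) hq

theorem IsWeightedHomogeneous.le_of_X_mul {i : σ} (hq0 : q ≠ 0)
    (hq : (X i * q).IsWeightedHomogeneous w d) : w i ≤ d :=
  (isWeightedHomogeneous_X R w i).le_of_mul_left (X_ne_zero i) hq0 hq

end CommSemiring

theorem IsWeightedHomogeneous.weight_eq_zero_of_isUnit {R : Type*} [CommRing R] [IsDomain R]
    {p : MvPolynomial σ R} {a : ℕ} (hp : p.IsWeightedHomogeneous w a) (hu : IsUnit p) :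
    a = 0 := by
  obtain ⟨c, hc, rfl⟩ := isUnit_iff_eq_C_of_isReduced.mp hu
  exact hp.inj_right (C_ne_zero.mpr hc.ne_zero) (isWeightedHomogeneous_C w c)

theorem IsWeightedHomogeneous.isUnit_iff {K : Type*} [Field K] {p : MvPolynomial σ K} {a : ℕ}
    (hw : ∀ i, w i ≠ 0) (hp : p.IsWeightedHomogeneous w a) (hp0 : p ≠ 0) :
    IsUnit p ↔ a = 0 := by
  refine ⟨hp.weight_eq_zero_of_isUnit, ?_⟩
  rintro rfl
  have hC : p = C (coeff 0 p) := by
    rw [← weightedHomogeneousComponent_zero p hw, weightedHomogeneousComponent_eq_self hp]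
  rw [hC, isUnit_map_iff, isUnit_iff_ne_zero]
  exact fun h0 => hp0 (by rw [hC, h0, C_0])

def SpansHighWeights {R : Type*} [CommSemiring R] (w : σ → ℕ) (f : MvPolynomial σ R) (a : ℕ)
    (g : MvPolynomial σ R) (b : ℕ) : Prop :=
  ∀ h d, h.IsWeightedHomogeneous w d → a + b ≤ d → ∃ u v,
    u.IsWeightedHomogeneous w (d - a) ∧ v.IsWeightedHomogeneous w (d - b) ∧ h = u * f + v * g

theorem SpansHighWeights.symm {R : Type*} [CommSemiring R] {f g : MvPolynomial σ R} {a b : ℕ}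
    (h : SpansHighWeights w f a g b) : SpansHighWeights w g b f a := by
  intro p d hp hd
  obtain ⟨u, v, hu, hv, rfl⟩ := h p d hp (by omega)
  exact ⟨v, u, hv, hu, add_comm _ _⟩

theorem SpansHighWeights.add_mul_right_right {R : Type*} [CommRing R] {f g t : MvPolynomial σ R}
    {a b : ℕ} (h : SpansHighWeights w f a g b) (ht : t.IsWeightedHomogeneous w (b - a))
    (hab : a ≤ b) : SpansHighWeights w f a (g + t * f) b := by
  intro p d hp hd
  obtain ⟨u, v, hu, hv, rfl⟩ := h p d hp hd
  refine ⟨u - v * t, v, hu.sub ?_, hv, by ring⟩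
  simpa [show d - b + (b - a) = d - a by omega] using hv.mul ht

theorem spansHighWeights_of_isUnit {K : Type*} [Field K] {f : MvPolynomial σ K} {a : ℕ}
    (hf : f.IsWeightedHomogeneous w a) (hu : IsUnit f) (g : MvPolynomial σ K) (b : ℕ) :
    SpansHighWeights w f a g b := by
  obtain rfl := hf.weight_eq_zero_of_isUnit hu
  obtain ⟨c, hc, rfl⟩ := isUnit_iff_eq_C_of_isReduced.mp hu
  intro h d hh _
  refine ⟨C c⁻¹ * h, 0, by simpa using hh.C_mul c⁻¹, isWeightedHomogeneous_zero _ _ _, ?_⟩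
  rw [zero_mul, add_zero, mul_right_comm, ← C_mul, inv_mul_cancel₀ hc.ne_zero, C_1, one_mul]

section TwoVariables

variable {K : Type*} [Field K] {w : Fin 2 → ℕ}

theorem exists_X_zero_dvd_sub_mul (hw : w 1 ≠ 0) {f h : MvPolynomial (Fin 2) K} {a d : ℕ}
    (hf : f.IsWeightedHomogeneous w a) (hxf : ¬X 0 ∣ f) (hh : h.IsWeightedHomogeneous w d)
    (had : a ≤ d) : ∃ t, t.IsWeightedHomogeneous w (d - a) ∧ X 0 ∣ h - t * f := by
  obtain ⟨A, hA⟩ : ∃ A, coeff (single 1 A) f ≠ 0 := by simpa [X_zero_dvd_iff] using hxf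
  by_cases hJ : ∃ J, coeff (single 1 J) h ≠ 0
  swap
  · exact ⟨0, isWeightedHomogeneous_zero _ _ _, by simpa [X_zero_dvd_iff] using hJ⟩
  obtain ⟨J, hJ⟩ := hJ
  have hwA : A * w 1 = a := by simpa [weight_single] using hf hA
  have hwJ : J * w 1 = d := by simpa [weight_single] using hh hJ
  have hAJ : A ≤ J := Nat.le_of_mul_le_mul_right (by omega) (Nat.pos_of_ne_zero hw)
  -- modulo `x`, `f ≡ c yᴬ` and `h ≡ e yᴶ`; `t = (e / c) y^(J - A)` gives `h - t * f ≡ 0`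
  set t := monomial (single (1 : Fin 2) (J - A)) (coeff (single 1 J) h / coeff (single 1 A) f)
  have ht : t.IsWeightedHomogeneous w (d - a) := by
    apply isWeightedHomogeneous_monomial
    rw [weight_single, smul_eq_mul, Nat.sub_mul, hwA, hwJ]
  have hrest : (h - t * f).IsWeightedHomogeneous w d :=
    hh.sub (by simpa [Nat.sub_add_cancel had] using ht.mul hf)
  refine ⟨t, ht, X_zero_dvd_iff.mpr fun j => ?_⟩
  rcases eq_or_ne j J with rfl | hj
  · have hsplit : (single 1 j : Fin 2 →₀ ℕ) = single 1 (j - A) + single 1 A := by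
      rw [← single_add, Nat.sub_add_cancel hAJ]
    rw [coeff_sub, hsplit, coeff_monomial_mul, ← hsplit, div_mul_cancel₀ _ hA, sub_self]
  · refine hrest.coeff_eq_zero _ ?_
    rw [weight_single, smul_eq_mul, ← hwJ]
    exact fun hjJ => hj (Nat.eq_of_mul_eq_mul_right (Nat.pos_of_ne_zero hw) hjJ)

theorem SpansHighWeights.X_zero_mul_right (hw : w 1 ≠ 0) {f g : MvPolynomial (Fin 2) K}
    {a b : ℕ} (hf : f.IsWeightedHomogeneous w a) (hxf : ¬X 0 ∣ f)
    (h : SpansHighWeights w f a g (b - w 0)) (hb : w 0 ≤ b) :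
    SpansHighWeights w f a (X 0 * g) b := by
  intro p d hp hd
  obtain ⟨t, ht, p₂, hp₂⟩ := exists_X_zero_dvd_sub_mul hw hf hxf hp (by omega)
  have hp₂w : p₂.IsWeightedHomogeneous w (d - w 0) := by
    refine IsWeightedHomogeneous.of_X_mul (hp₂ ▸ hp.sub ?_)
    simpa [show d - a + a = d by omega] using ht.mul hf
  obtain ⟨u, v, hu, hv, huv⟩ := h p₂ (d - w 0) hp₂w (by omega)
  refine ⟨t + X 0 * u, v, ht.add ?_,
    by simpa [show d - w 0 - (b - w 0) = d - b by omega] using hv,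
    by linear_combination hp₂ + X 0 * huv⟩
  simpa [show w 0 + (d - w 0 - a) = d - a by omega] using (isWeightedHomogeneous_X K w 0).mul hu

theorem spansHighWeights_of_isRelPrime (hw : ∀ i, w i ≠ 0) {f g : MvPolynomial (Fin 2) K}
    {a b : ℕ} (hf : f.IsWeightedHomogeneous w a) (hg : g.IsWeightedHomogeneous w b)
    (hfg : IsRelPrime f g) : SpansHighWeights w f a g b := by
  induction hN : a + b using Nat.strong_induction_on generalizing f g a b with
  | _ N ih =>
  wlog hab : a ≤ b generalizing f g a b
  · exact (this hg hf hfg.symm (by omega) (by omega)).symm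
  by_cases hfu : IsUnit f
  · exact spansHighWeights_of_isUnit hf hfu g b
  by_cases hgu : IsUnit g
  · exact (spansHighWeights_of_isUnit hg hgu f a).symm
  have hX : ¬IsUnit (X 0 : MvPolynomial (Fin 2) K) := by
    rw [(isWeightedHomogeneous_X K w 0).isUnit_iff hw (X_ne_zero 0)]
    exact hw 0
  have hw0 : 0 < w 0 := Nat.pos_of_ne_zero (hw 0)
  by_cases hxf : X 0 ∣ f
  · obtain ⟨f₂, rfl⟩ := hxf
    have hxg : ¬X 0 ∣ g := fun hxg => hX (hfg (dvd_mul_right _ _) hxg)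
    have hf₂0 : f₂ ≠ 0 := by
      rintro rfl
      exact hgu (isRelPrime_zero_left.mp (by simpa using hfg))
    have hwa := hf.le_of_X_mul hf₂0
    have := ih (a - w 0 + b) (by omega) hf.of_X_mul hg hfg.of_mul_left_right rfl
    exact (this.symm.X_zero_mul_right (hw 1) hg hxg hwa).symm
  · obtain ⟨t, ht, g₂, hg₂⟩ := exists_X_zero_dvd_sub_mul (hw 1) hf hxf hg hab
    have hXg₂ : (X 0 * g₂).IsWeightedHomogeneous w b := by
      refine hg₂ ▸ hg.sub ?_
      simpa [Nat.sub_add_cancel hab] using ht.mul hf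
    have hg₂0 : g₂ ≠ 0 := by
      rintro rfl
      rw [mul_zero, sub_eq_zero] at hg₂
      exact hfu (hfg dvd_rfl (hg₂ ▸ dvd_mul_left f t))
    have hwb := hXg₂.le_of_X_mul hg₂0
    have hcop : IsRelPrime f g₂ :=
      (hg₂ ▸ IsRelPrime.sub_mul_right_right_iff.mpr hfg).of_mul_right_right
    have := ih (a + (b - w 0)) (by omega) hf hXg₂.of_X_mul hcop rfl
    rw [show g = X 0 * g₂ + t * f by rw [← hg₂]; ring]
    exact (this.X_zero_mul_right (hw 1) hf hxf hwb).add_mul_right_right ht hab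

end TwoVariables

end MvPolynomial

namespace MvPowerSeries

variable {σ : Type*} {w : σ → ℕ}

section Semiring

variable {R : Type*} [Semiring R]

theorem ext_weightedHomogeneousComponent (w : σ → ℕ) {f g : MvPowerSeries σ R}
    (h : ∀ d, weightedHomogeneousComponent w d f = weightedHomogeneousComponent w d g) :
    f = g := by
  ext α
  simpa [coeff_weightedHomogeneousComponent] using congr_arg (coeff α) (h (weight w α))

theorem nat_le_weightedOrder_iff {f : MvPowerSeries σ R} {n : ℕ} :
    n ≤ f.weightedOrder w ↔ ∀ d < n, weightedHomogeneousComponent w d f = 0 := by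
  refine ⟨fun h d hd => weightedHomogeneousComponent_of_lt_weightedOrder_eq_zero
    (lt_of_lt_of_le (by exact_mod_cast hd) h), fun h => nat_le_weightedOrder w fun α hα => ?_⟩
  simpa [coeff_weightedHomogeneousComponent] using congr_arg (coeff α) (h _ hα)

theorem weightedHomogeneousComponent_mul_eq_sum_of_le_weightedOrder {f g : MvPowerSeries σ R}
    {a b : ℕ} (hf : a ≤ f.weightedOrder w) (hg : b ≤ g.weightedOrder w) (k : ℕ) :
    weightedHomogeneousComponent w (a + b + k) (f * g) =
      ∑ p ∈ antidiagonal k, weightedHomogeneousComponent w (a + p.1) f *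
        weightedHomogeneousComponent w (b + p.2) g := by
  classical
  ext α
  simp only [coeff_weightedHomogeneousComponent, map_sum, coeff_mul, ite_zero_mul_ite_zero]
  rw [Finset.sum_comm]
  split_ifs with hα
  · refine Finset.sum_congr rfl fun x hx => ?_
    have hwx : weight w x.1 + weight w x.2 = a + b + k := by
      rw [← map_add, mem_antidiagonal.mp hx, hα]
    by_cases hx12 : a ≤ weight w x.1 ∧ b ≤ weight w x.2
    · rw [Finset.sum_eq_single_of_mem (weight w x.1 - a, weight w x.2 - b)
        (mem_antidiagonal.mpr (by simp only; omega)), if_pos (by simp only; omega)]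
      refine fun p _ hne => if_neg fun ⟨h1, h2⟩ => ?_
      exact hne (Prod.ext (by simp only; omega) (by simp only; omega))
    · have h0 : coeff x.1 f * coeff x.2 g = 0 := by
        rcases not_and_or.mp hx12 with h | h
        · rw [coeff_eq_zero_of_lt_weightedOrder w
            (lt_of_lt_of_le (by exact_mod_cast not_le.mp h) hf), zero_mul]
        · rw [coeff_eq_zero_of_lt_weightedOrder w
            (lt_of_lt_of_le (by exact_mod_cast not_le.mp h) hg), mul_zero]
      simp [h0]
  · refine (Finset.sum_eq_zero fun x hx => Finset.sum_eq_zero fun p hp => if_neg ?_).symm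
    rintro ⟨h1, h2⟩
    have := mem_antidiagonal.mp hp
    exact hα (by rw [← mem_antidiagonal.mp hx, map_add]; omega)

theorem IsWeightedHomogeneous.sum {ι : Type*} (s : Finset ι) {f : ι → MvPowerSeries σ R}
    {d : ℕ} (hf : ∀ i ∈ s, (f i).IsWeightedHomogeneous w d) :
    (∑ i ∈ s, f i).IsWeightedHomogeneous w d := by
  rw [isWeightedHomogeneous_iff_eq_weightedHomogeneousComponent, map_sum]
  exact Finset.sum_congr rfl fun i hi =>
    isWeightedHomogeneous_iff_eq_weightedHomogeneousComponent.mp (hf i hi)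

variable (w) in
/-- The power series `∑ₖ u k`, for `u k` weighted homogeneous of weight `a + k`. -/
def sumFrom (a : ℕ) (u : ℕ → MvPowerSeries σ R) : MvPowerSeries σ R :=
  fun α => if a ≤ weight w α then coeff α (u (weight w α - a)) else 0

theorem le_weightedOrder_sumFrom (a : ℕ) (u : ℕ → MvPowerSeries σ R) :
    a ≤ (sumFrom w a u).weightedOrder w :=
  nat_le_weightedOrder w fun _ hα => if_neg (not_le.mpr hα)

theorem weightedHomogeneousComponent_sumFrom {a : ℕ} {u : ℕ → MvPowerSeries σ R}
    (hu : ∀ k, (u k).IsWeightedHomogeneous w (a + k)) (k : ℕ) :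
    weightedHomogeneousComponent w (a + k) (sumFrom w a u) = u k := by
  ext α
  rw [coeff_weightedHomogeneousComponent]
  split_ifs with hα
  · exact if_pos (by omega) |>.trans (by rw [hα, Nat.add_sub_cancel_left])
  · exact (IsWeightedHomogeneous.coeff_eq_zero (hu k) hα).symm

end Semiring

section Lifting

variable {R : Type*} [CommRing R]

theorem IsWeightedHomogeneous.sub {f g : MvPowerSeries σ R} {d : ℕ}
    (hf : f.IsWeightedHomogeneous w d) (hg : g.IsWeightedHomogeneous w d) :
    (f - g).IsWeightedHomogeneous w d := by
  rw [isWeightedHomogeneous_iff_eq_weightedHomogeneousComponent] at hf hg ⊢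
  rw [map_sub, ← hf, ← hg]

variable (w) (fa gb F : MvPowerSeries σ R) (a b : ℕ)

/-- `Classical.epsilon` returns an arbitrary pair when no such cofactors exist. -/
def liftCofactors (k : ℕ) (h : MvPowerSeries σ R) : MvPowerSeries σ R × MvPowerSeries σ R :=
  Classical.epsilon fun uv => uv.1.IsWeightedHomogeneous w (a + k) ∧
    uv.2.IsWeightedHomogeneous w (b + k) ∧ h = uv.1 * gb + fa * uv.2

/-- The components `(u k, v k)` of weights `(a + k, b + k)` of the factors of `F`, solved from
`F_{a+b+k} = ∑_{i+j=k} u i * v j`, where the new pair enters as `u k * gb + fa * v k`. -/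
def liftComponents : ℕ → MvPowerSeries σ R × MvPowerSeries σ R
  | 0 => (fa, gb)
  | k + 1 => liftCofactors w fa gb a b (k + 1) (weightedHomogeneousComponent w (a + b + (k + 1)) F -
      ∑ i : Fin k, (liftComponents (i + 1)).1 * (liftComponents (k - i)).2)
decreasing_by all_goals omega

variable {w fa gb F a b}

theorem liftComponents_zero : liftComponents w fa gb F a b 0 = (fa, gb) := by
  rw [liftComponents]

theorem liftComponents_spec (hfa : fa.IsWeightedHomogeneous w a)
    (hgb : gb.IsWeightedHomogeneous w b)
    (hspan : ∀ k (h : MvPowerSeries σ R), h.IsWeightedHomogeneous w (a + b + k) → ∃ u v,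
      u.IsWeightedHomogeneous w (a + k) ∧ v.IsWeightedHomogeneous w (b + k) ∧
        h = u * gb + fa * v)
    (hinit : weightedHomogeneousComponent w (a + b) F = fa * gb) (k : ℕ) :
    (liftComponents w fa gb F a b k).1.IsWeightedHomogeneous w (a + k) ∧
      (liftComponents w fa gb F a b k).2.IsWeightedHomogeneous w (b + k) ∧
      weightedHomogeneousComponent w (a + b + k) F = ∑ p ∈ antidiagonal k,
        (liftComponents w fa gb F a b p.1).1 * (liftComponents w fa gb F a b p.2).2 := by
  induction k using Nat.strong_induction_on with
  | _ k ih =>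
  rcases k with _ | k
  · simp [liftComponents, hfa, hgb, hinit]
  set S := ∑ i : Fin k, (liftComponents w fa gb F a b (i + 1)).1 *
    (liftComponents w fa gb F a b (k - i)).2
  have hS : S.IsWeightedHomogeneous w (a + b + (k + 1)) := by
    refine IsWeightedHomogeneous.sum _ fun i _ => ?_
    have : ((liftComponents w fa gb F a b (i + 1)).1 * (liftComponents w fa gb F a b (k - i)).2
        ).IsWeightedHomogeneous w (a + (i + 1) + (b + (k - i))) :=
      IsWeightedHomogeneous.mul (ih (i + 1) (by omega)).1 (ih (k - i) (by omega)).2.1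
    rwa [show a + (i + 1) + (b + (k - i)) = a + b + (k + 1) by omega] at this
  obtain ⟨u, v, huv⟩ := hspan (k + 1) _
    (IsWeightedHomogeneous.sub (isWeightedHomogeneous_weightedHomogeneousComponent w F _) hS)
  have hk : liftComponents w fa gb F a b (k + 1) = liftCofactors w fa gb a b (k + 1)
      (weightedHomogeneousComponent w (a + b + (k + 1)) F - S) := by
    rw [liftComponents]
  obtain ⟨hu, hv, huv⟩ := Classical.epsilon_spec (p := fun uv : MvPowerSeries σ R × _ =>
    uv.1.IsWeightedHomogeneous w (a + (k + 1)) ∧ uv.2.IsWeightedHomogeneous w (b + (k + 1)) ∧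
      weightedHomogeneousComponent w (a + b + (k + 1)) F - S = uv.1 * gb + fa * uv.2)
    ⟨(u, v), huv⟩
  rw [← liftCofactors, ← hk] at hu hv huv
  refine ⟨@hu, @hv, ?_⟩
  rw [Finset.Nat.sum_antidiagonal_eq_sum_range_succ (fun i j =>
      (liftComponents w fa gb F a b i).1 * (liftComponents w fa gb F a b j).2),
    Finset.sum_range_succ, Finset.sum_range_succ', ← Fin.sum_univ_eq_sum_range]
  simp only [Nat.add_sub_add_right, Nat.sub_zero, Nat.sub_self, liftComponents_zero]
  linear_combination huv

theorem exists_mul_eq_of_weightedHomogeneousComponent_eq_mul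
    (hfa : fa.IsWeightedHomogeneous w a) (hgb : gb.IsWeightedHomogeneous w b)
    (hspan : ∀ k (h : MvPowerSeries σ R), h.IsWeightedHomogeneous w (a + b + k) → ∃ u v,
      u.IsWeightedHomogeneous w (a + k) ∧ v.IsWeightedHomogeneous w (b + k) ∧
        h = u * gb + fa * v)
    (hF : ((a + b : ℕ) : ℕ∞) ≤ F.weightedOrder w)
    (hinit : weightedHomogeneousComponent w (a + b) F = fa * gb) :
    ∃ f g : MvPowerSeries σ R, F = f * g ∧
      a ≤ f.weightedOrder w ∧ weightedHomogeneousComponent w a f = fa ∧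
      b ≤ g.weightedOrder w ∧ weightedHomogeneousComponent w b g = gb := by
  have hspec := liftComponents_spec hfa hgb hspan hinit
  set f := sumFrom w a fun k => (liftComponents w fa gb F a b k).1
  set g := sumFrom w b fun k => (liftComponents w fa gb F a b k).2
  have hf : ∀ k, weightedHomogeneousComponent w (a + k) f = (liftComponents w fa gb F a b k).1 :=
    weightedHomogeneousComponent_sumFrom fun k => (hspec k).1
  have hg : ∀ k, weightedHomogeneousComponent w (b + k) g = (liftComponents w fa gb F a b k).2 :=
    weightedHomogeneousComponent_sumFrom fun k => (hspec k).2.1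
  refine ⟨f, g, ext_weightedHomogeneousComponent w fun d => ?_, le_weightedOrder_sumFrom _ _,
    by simpa [liftComponents_zero] using hf 0, le_weightedOrder_sumFrom _ _,
    by simpa [liftComponents_zero] using hg 0⟩
  obtain hd | ⟨k, rfl⟩ : d < a + b ∨ ∃ k, d = a + b + k :=
    (lt_or_ge d (a + b)).imp_right fun hd => ⟨d - (a + b), by omega⟩
  · rw [nat_le_weightedOrder_iff.mp hF d hd, nat_le_weightedOrder_iff.mp
      ((add_le_add (le_weightedOrder_sumFrom _ _) (le_weightedOrder_sumFrom _ _)).trans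
        (le_weightedOrder_mul w)) d (by exact_mod_cast hd)]
  · rw [(hspec k).2.2, weightedHomogeneousComponent_mul_eq_sum_of_le_weightedOrder
      (le_weightedOrder_sumFrom _ _) (le_weightedOrder_sumFrom _ _)]
    exact Finset.sum_congr rfl fun p _ => by rw [hf, hg]

end Lifting

section Polynomial

variable {R : Type*} [CommSemiring R]

theorem IsWeightedHomogeneous.exists_coe_eq [Finite σ] (hw : ∀ i, w i ≠ 0)
    {f : MvPowerSeries σ R} {d : ℕ} (hf : f.IsWeightedHomogeneous w d) :
    ∃ p : MvPolynomial σ R, p.IsWeightedHomogeneous w d ∧ (p : MvPowerSeries σ R) = f :=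
  ⟨.ofCoeff (.ofSupportFinite f ((finite_of_nat_weight_eq w hw d).subset fun _ hα => hf hα)),
    fun _ hα => hf hα, rfl⟩

theorem _root_.MvPolynomial.SpansHighWeights.exists_mvPowerSeries [Finite σ]
    (hw : ∀ i, w i ≠ 0) {f g : MvPolynomial σ R} {a b : ℕ}
    (h : MvPolynomial.SpansHighWeights w f a g b) (k : ℕ) (H : MvPowerSeries σ R)
    (hH : H.IsWeightedHomogeneous w (a + b + k)) :
    ∃ u v : MvPowerSeries σ R, u.IsWeightedHomogeneous w (a + k) ∧
      v.IsWeightedHomogeneous w (b + k) ∧ H = u * g + f * v := by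
  obtain ⟨P, hP, rfl⟩ := hH.exists_coe_eq hw
  obtain ⟨u, v, hu, hv, rfl⟩ := h P _ hP (by omega)
  rw [show a + b + k - a = b + k by omega] at hu
  rw [show a + b + k - b = a + k by omega] at hv
  exact ⟨v, u, hv.coe, hu.coe, by push_cast; ring⟩

end Polynomial

theorem isUnit_of_isUnit_weightedHomogeneousComponent {R : Type*} [CommRing R]
    {f : MvPowerSeries σ R} {d : ℕ} (h : IsUnit (weightedHomogeneousComponent w d f)) :
    IsUnit f := by
  rw [isUnit_iff_constantCoeff, ← coeff_zero_eq_constantCoeff_apply] at h ⊢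
  rw [coeff_weightedHomogeneousComponent] at h
  split_ifs at h
  · exact h
  · have := subsingleton_of_zero_eq_one (isUnit_zero_iff.mp h)
    exact isUnit_of_subsingleton _

theorem irreducible_of_weightedHomogeneousComponent_eq [Finite σ] {K : Type*} [Field K]
    (hw : ∀ i, w i ≠ 0) {fa : MvPolynomial σ K} {a : ℕ} (hfa : fa.IsWeightedHomogeneous w a)
    (hirr : Irreducible fa) {f : MvPowerSeries σ K} (hf : a ≤ f.weightedOrder w)
    (hfa' : weightedHomogeneousComponent w a f = fa) : Irreducible f := by
  have ha : a ≠ 0 := fun ha => hirr.not_isUnit ((hfa.isUnit_iff hw hirr.ne_zero).mpr ha)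
  have hord : f.weightedOrder w = a := by
    refine le_antisymm (not_lt.mp fun h => hirr.ne_zero (MvPolynomial.coe_inj.mp ?_)) hf
    rw [← hfa', weightedHomogeneousComponent_of_lt_weightedOrder_eq_zero h, MvPolynomial.coe_zero]
  refine ⟨fun hu => ?_, fun p q hpq => ?_⟩
  · have : constantCoeff f = 0 := by
      rw [← coeff_zero_eq_constantCoeff_apply]
      exact coeff_eq_zero_of_lt_weightedOrder w (by simp [hord, Nat.pos_of_ne_zero ha])
    rw [isUnit_iff_constantCoeff, this] at hu
    exact not_isUnit_zero hu
  have hfin : p.weightedOrder w + q.weightedOrder w = a := by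
    rw [← weightedOrder_mul, ← hpq, hord]
  have hfin' := WithTop.add_ne_top.mp (hfin ▸ ENat.natCast_ne_top a)
  obtain ⟨dp, hdp⟩ := ENat.ne_top_iff_exists.mp hfin'.1
  obtain ⟨dq, hdq⟩ := ENat.ne_top_iff_exists.mp hfin'.2
  have hsum : dp + dq = a := by rw [← hdp, ← hdq] at hfin; exact_mod_cast hfin
  obtain ⟨P, -, hP⟩ := IsWeightedHomogeneous.exists_coe_eq hw
    (isWeightedHomogeneous_weightedHomogeneousComponent w p dp)
  obtain ⟨Q, -, hQ⟩ := IsWeightedHomogeneous.exists_coe_eq hw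
    (isWeightedHomogeneous_weightedHomogeneousComponent w q dq)
  have hPQ : fa = P * Q := MvPolynomial.coe_inj.mp <| by
    rw [MvPolynomial.coe_mul, hP, hQ, ← weightedHomogeneousComponent_mul_of_le_weightedOrder
      hdp.le hdq.le, ← hpq, hsum, hfa']
  refine (hirr.isUnit_or_isUnit hPQ).imp (fun hu => ?_) (fun hu => ?_)
  · refine isUnit_of_isUnit_weightedHomogeneousComponent (w := w) (d := dp) ?_
    rw [← hP]
    exact hu.map MvPolynomial.coeToMvPowerSeries.ringHom
  · refine isUnit_of_isUnit_weightedHomogeneousComponent (w := w) (d := dq) ?_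
    rw [← hQ]
    exact hu.map MvPolynomial.coeToMvPowerSeries.ringHom

end MvPowerSeries

theorem weight_qhWeight (nw mw : ℕ) (α : Fin 2 →₀ ℕ) :
    weight (qhWeight nw mw) α = nw * α 0 + mw * α 1 := by
  simp [weight_eq_sum, Fin.sum_univ_two, qhWeight, mul_comm]

theorem qhComponent_eq_weightedHomogeneousComponent (K : Type*) [Field K] (nw mw d : ℕ)
    (F : MvPowerSeries (Fin 2) K) :
    qhComponent K nw mw d F = MvPowerSeries.weightedHomogeneousComponent (qhWeight nw mw) d F := by
  ext α
  rw [MvPowerSeries.coeff_weightedHomogeneousComponent, weight_qhWeight]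
  exact if_congr Iff.rfl rfl rfl

theorem quasihomogeneous_factorization_general {K : Type*} [Field K] (nw mw : ℕ)
    (hnw : 0 < nw) (hmw : 0 < mw)
    (F : MvPowerSeries (Fin 2) K) (a b : ℕ)
    (fa gb : MvPolynomial (Fin 2) K)
    (hfa : fa.IsWeightedHomogeneous (qhWeight nw mw) a)
    (hgb : gb.IsWeightedHomogeneous (qhWeight nw mw) b)
    (hlow : ∀ d : ℕ, d < a + b → qhComponent K nw mw d F = 0)
    (hinit : qhComponent K nw mw (a + b) F
      = ((fa * gb : MvPolynomial (Fin 2) K) : MvPowerSeries (Fin 2) K))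
    (hcop : IsRelPrime fa gb) :
    ∃ f g : MvPowerSeries (Fin 2) K, F = f * g ∧
      (∀ d : ℕ, d < a → qhComponent K nw mw d f = 0) ∧
      qhComponent K nw mw a f = ((fa : MvPolynomial (Fin 2) K) : MvPowerSeries (Fin 2) K) ∧
      (∀ d : ℕ, d < b → qhComponent K nw mw d g = 0) ∧
      qhComponent K nw mw b g = ((gb : MvPolynomial (Fin 2) K) : MvPowerSeries (Fin 2) K) ∧
      (Irreducible fa → Irreducible f) := by
  have hw : ∀ i, qhWeight nw mw i ≠ 0 := by
    intro i
    fin_cases i <;> simp [qhWeight] <;> omega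
  simp only [qhComponent_eq_weightedHomogeneousComponent,
    ← MvPowerSeries.nat_le_weightedOrder_iff] at hlow hinit ⊢
  obtain ⟨f, g, rfl, hf, hfa', hg, hgb'⟩ :=
    MvPowerSeries.exists_mul_eq_of_weightedHomogeneousComponent_eq_mul hfa.coe hgb.coe
      ((MvPolynomial.spansHighWeights_of_isRelPrime hw hfa hgb hcop).exists_mvPowerSeries hw)
      hlow (by rw [hinit, MvPolynomial.coe_mul])
  exact ⟨f, g, rfl, hf, hfa', hg, hgb',
    fun hirr => MvPowerSeries.irreducible_of_weightedHomogeneousComponent_eq hw hfa hirr hf hfa'⟩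

/-- Lemma A1 of Artal–et al.: if the initial `ω`-quasihomogeneous form of `F` factors as
`f_a·g_b` with `f_a`, `g_b` quasihomogeneous and coprime, then `F = f·g` with
`f = f_a + (higher weight)`, `g = g_b + (higher weight)`; moreover if `f_a` is
an irreducible polynomial, then `f` is an irreducible power series. -/
theorem quasihomogeneous_factorization {K : Type*} [Field K] (nw mw : ℕ)
    (hnw : 0 < nw) (hmw : 0 < mw)
    (F : MvPowerSeries (Fin 2) K) (hF : F ≠ 0) (a b : ℕ)
    (fa gb : MvPolynomial (Fin 2) K)
    (hfa : fa.IsWeightedHomogeneous (qhWeight nw mw) a)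
    (hgb : gb.IsWeightedHomogeneous (qhWeight nw mw) b)
    (hlow : ∀ d : ℕ, d < a + b → qhComponent K nw mw d F = 0)
    (hinit : qhComponent K nw mw (a + b) F
      = ((fa * gb : MvPolynomial (Fin 2) K) : MvPowerSeries (Fin 2) K))
    (hcop : IsRelPrime fa gb) :
    ∃ f g : MvPowerSeries (Fin 2) K, F = f * g ∧
      (∀ d : ℕ, d < a → qhComponent K nw mw d f = 0) ∧
      qhComponent K nw mw a f = ((fa : MvPolynomial (Fin 2) K) : MvPowerSeries (Fin 2) K) ∧
      (∀ d : ℕ, d < b → qhComponent K nw mw d g = 0) ∧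
      qhComponent K nw mw b g = ((gb : MvPolynomial (Fin 2) K) : MvPowerSeries (Fin 2) K) ∧
      (Irreducible fa → Irreducible f) :=
  quasihomogeneous_factorization_general nw mw hnw hmw F a b fa gb hfa hgb hlow hinit hcop
end
end
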